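/- arXiv:2405.11918 — 10 statements merged into one kernel-verified Lean document; each statement's English description precedes it below -/
import Mathlib

section
/- Let G be a finite connected graph and x a vertex of G. Then gp(G − x) ≤ 2·gp(G). -/
open SimpleGraph

/-- `S` is a *general position set* of `G`: no three distinct vertices of `S`
lie on a common shortest path (geodesic) of `G`. -/
def IsGPSet {V : Type*} (G : SimpleGraph V) (S : Set V) : Prop :=
  ∀ ⦃u v w : V⦄, u ∈ S → v ∈ S → w ∈ S → u ≠ v → u ≠ w → v ≠ w →
    ∀ p : G.Walk u v, p.IsPath → p.length = G.dist u v → w ∉ p.support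

/-- The *general position number* of `G`: the maximum cardinality of a
general position set. -/
noncomputable def gpNum {V : Type*} [Fintype V] (G : SimpleGraph V) : ℕ :=
  sSup {n : ℕ | ∃ S : Finset V, IsGPSet G ↑S ∧ S.card = n}

/-- The vertex-deleted subgraph `G - x`, induced on `V(G) \ {x}`. -/
def delVert {V : Type*} (G : SimpleGraph V) (x : V) : SimpleGraph {y : V // y ≠ x} :=
  G.comap Subtype.val

/-!
Let `S` be a general position set of `G - x`, and call `b` *below* `a` when `b` lies on a
geodesic from `a` to `x`. Three vertices of `S` on a `G`-geodesic must see `x` on that geodesic,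
since otherwise the geodesic survives in `G - x` (where distances can only grow). If `w` lies on
a `u`–`v` geodesic through `x`, then `w` is below `u` or below `v`; so every antichain of `S` for
"below" is a general position set of `G`. Conversely a chain `c` below `b` below `a` in `S` would
put `b` on an `a`–`c` geodesic avoiding `x`. Hence `S` has no chains of length three, and it
splits into its minimal elements and the rest, two antichains.
-/

lemma Finset.exists_isAntichain_isAntichain_sdiff {α : Type*} [DecidableEq α]
    {r : α → α → Prop} (s : Finset α)
    (hs : ∀ a ∈ s, ∀ b ∈ s, ∀ c ∈ s, a ≠ b → b ≠ c → r a b → r b c → False) :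
    ∃ t ⊆ s, IsAntichain r (t : Set α) ∧ IsAntichain r ((s \ t : Finset α) : Set α) := by
  classical
  refine ⟨s.filter fun b => ∀ a ∈ s, a ≠ b → ¬ r a b, filter_subset _ _, ?_, ?_⟩
  · intro a ha b hb hab hr
    exact (mem_filter.mp hb).2 a (mem_filter.mp ha).1 hab hr
  · intro b hb c hc hbc hr
    obtain ⟨hbs, hbt⟩ := mem_sdiff.mp hb
    simp only [mem_filter, hbs, true_and, not_forall, not_not] at hbt
    obtain ⟨a, ha, hab, hra⟩ := hbt
    exact hs a ha b hbs c (mem_sdiff.mp hc).1 hab hbc hra hr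

namespace SimpleGraph

variable {V W : Type*} {G : SimpleGraph V} {G' : SimpleGraph W} {u v w x : V}

def Between (G : SimpleGraph V) (u w v : V) : Prop :=
  G.dist u w + G.dist w v = G.dist u v

lemma Between.symm (h : G.Between u w v) : G.Between v w u := by
  simpa only [Between, dist_comm, add_comm] using h

lemma Between.swap_right_iff (hG : G.Connected) (h : G.Between u w v) :
    G.Between u v w ↔ w = v := by
  refine ⟨fun h' => ?_, fun hwv => hwv ▸ h⟩
  unfold Between at h h'
  have := G.dist_comm (u := w) (v := v)
  exact (hG.dist_eq_zero_iff).mp (by omega)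

lemma Between.trans_left_right (hG : G.Connected) {y : V} (h₁ : G.Between u w v)
    (h₂ : G.Between u y w) : G.Between y w v := by
  unfold Between at *
  have := hG.dist_triangle (u := u) (v := y) (w := v)
  have := hG.dist_triangle (u := y) (v := w) (w := v)
  omega

lemma Between.trans_right_left (hG : G.Connected) {y : V} (h₁ : G.Between u w v)
    (h₂ : G.Between w y v) : G.Between u w y := by
  unfold Between at *
  have := hG.dist_triangle (u := u) (v := y) (w := v)
  have := hG.dist_triangle (u := u) (v := w) (w := y)
  omega

namespace Walk

lemma between_of_mem_support (p : G.Walk u v) (hp : p.length = G.dist u v)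
    (hw : w ∈ p.support) : G.Between u w v := by
  classical
  have hsplit : (p.takeUntil w hw).length + (p.dropUntil w hw).length = p.length := by
    rw [← length_append, p.take_spec hw]
  have := dist_le (p.takeUntil w hw)
  have := dist_le (p.dropUntil w hw)
  have := (p.takeUntil w hw).reachable.dist_triangle_left v
  unfold Between
  omega

lemma between_or_between_of_mem_support (p : G.Walk u v) (hp : p.length = G.dist u v)
    (hw : w ∈ p.support) (hx : x ∈ p.support) : G.Between u x w ∨ G.Between w x v := by
  classical
  have hx' : x ∈ (p.takeUntil w hw).support ∨ x ∈ (p.dropUntil w hw).support := by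
    rw [← mem_support_append_iff, p.take_spec hw]
    exact hx
  refine hx'.imp (fun hx' => ?_) (fun hx' => ?_)
  · exact between_of_mem_support _ (length_eq_dist_of_subwalk hp (p.isSubwalk_takeUntil hw)) hx'
  · exact between_of_mem_support _ (length_eq_dist_of_subwalk hp (p.isSubwalk_dropUntil hw)) hx'

end Walk

lemma Between.exists_walk (hG : G.Connected) (h : G.Between u w v) :
    ∃ p : G.Walk u v, p.length = G.dist u v ∧ w ∈ p.support ∧
      ∀ y ∈ p.support, G.Between u y w ∨ G.Between w y v := by
  obtain ⟨p₁, hp₁⟩ := hG.exists_walk_length_eq_dist u w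
  obtain ⟨p₂, hp₂⟩ := hG.exists_walk_length_eq_dist w v
  refine ⟨p₁.append p₂, by rw [Walk.length_append, hp₁, hp₂]; exact h, by simp, fun y hy => ?_⟩
  rw [Walk.mem_support_append_iff] at hy
  exact hy.imp (p₁.between_of_mem_support hp₁) (p₂.between_of_mem_support hp₂)

lemma Hom.dist_le (f : G →g G') (h : G.Reachable u v) :
    G'.dist (f u) (f v) ≤ G.dist u v := by
  obtain ⟨p, hp⟩ := h.exists_walk_length_eq_dist
  rw [← hp, ← Walk.length_map f]
  exact SimpleGraph.dist_le _

lemma isGPSet_empty (G : SimpleGraph V) : IsGPSet G ∅ :=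
  fun _ _ _ hu => hu.elim

lemma bddAbove_card_isGPSet [Fintype V] (G : SimpleGraph V) :
    BddAbove {n : ℕ | ∃ S : Finset V, IsGPSet G ↑S ∧ S.card = n} := by
  refine ⟨Fintype.card V, ?_⟩
  rintro n ⟨S, -, rfl⟩
  exact S.card_le_univ

lemma IsGPSet.card_le_gpNum [Fintype V] {S : Finset V} (hS : IsGPSet G S) :
    S.card ≤ gpNum G :=
  le_csSup (bddAbove_card_isGPSet G) ⟨S, hS, rfl⟩

lemma exists_isGPSet_card_eq_gpNum [Fintype V] (G : SimpleGraph V) :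
    ∃ S : Finset V, IsGPSet G S ∧ S.card = gpNum G :=
  Nat.sSup_mem (s := {n : ℕ | ∃ S : Finset V, IsGPSet G ↑S ∧ S.card = n})
    ⟨0, ∅, by simpa using isGPSet_empty G, rfl⟩ (bddAbove_card_isGPSet G)

/-- A geodesic of `G` inside `s` lifts to a geodesic of `G[s]`, since distances in `G[s]` are at
least those in `G`. -/
lemma IsGPSet.exists_mem_support_notMem_of_induce {s : Set V} {S : Set s}
    (hS : IsGPSet (G.induce s) S) {u v w : s} (hu : u ∈ S) (hv : v ∈ S) (hw : w ∈ S)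
    (huv : u ≠ v) (huw : u ≠ w) (hvw : v ≠ w) (p : G.Walk u v) (hp : p.length = G.dist u v)
    (hwp : (w : V) ∈ p.support) : ∃ y ∈ p.support, y ∉ s := by
  by_contra! hps
  let q : (G.induce s).Walk u v := p.induce s hps
  have hqp : q.length = p.length := by
    have := congrArg Walk.length (p.map_induce hps)
    rwa [Walk.length_map] at this
  have hq : q.length = (G.induce s).dist u v :=
    le_antisymm (hqp ▸ hp ▸ Hom.dist_le (Embedding.induce s).toHom q.reachable) (dist_le q)
  refine hS hu hv hw huv huw hvw q (q.isPath_of_length_eq_dist hq) hq ?_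
  simpa [q] using hwp

/-- `S` is in general position in `G`, except possibly along geodesics through `x`. -/
def IsGPSetExcept (G : SimpleGraph V) (x : V) (S : Set V) : Prop :=
  ∀ ⦃u v w : V⦄, u ∈ S → v ∈ S → w ∈ S → u ≠ v → u ≠ w → v ≠ w →
    ∀ p : G.Walk u v, p.length = G.dist u v → w ∈ p.support → x ∈ p.support

lemma IsGPSetExcept.mono {S T : Set V} (hT : IsGPSetExcept G x T) (hST : S ⊆ T) :
    IsGPSetExcept G x S :=
  fun _ _ _ hu hv hw => hT (hST hu) (hST hv) (hST hw)

lemma IsGPSet.isGPSetExcept_delVert {S : Set {y // y ≠ x}} (hS : IsGPSet (delVert G x) S) :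
    IsGPSetExcept G x (Subtype.val '' S) := by
  rintro _ _ _ ⟨u, hu, rfl⟩ ⟨v, hv, rfl⟩ ⟨w, hw, rfl⟩ huv huw hvw p hp hwp
  obtain ⟨y, hy, hyx⟩ := IsGPSet.exists_mem_support_notMem_of_induce (s := {y | y ≠ x}) hS hu hv
    hw (ne_of_apply_ne _ huv) (ne_of_apply_ne _ huw) (ne_of_apply_ne _ hvw) p hp hwp
  have hyx : y = x := by simpa using hyx
  exact hyx ▸ hy

lemma IsGPSetExcept.isGPSet_of_isAntichain (hG : G.Connected) {S : Set V}
    (hS : IsGPSetExcept G x S) (hanti : IsAntichain (fun a b => G.Between a b x) S) :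
    IsGPSet G S := by
  intro u v w hu hv hw huv huw hvw p _ hp hwp
  have huwv := p.between_of_mem_support hp hwp
  rcases p.between_or_between_of_mem_support hp hwp (hS hu hv hw huv huw hvw p hp hwp) with
    hx | hx
  · exact hanti hv hw hvw (huwv.trans_left_right hG hx).symm
  · exact hanti hu hw huw (huwv.trans_right_left hG hx)

lemma IsGPSetExcept.not_between_between (hG : G.Connected) {S : Set V}
    (hS : IsGPSetExcept G x S) (hxS : x ∉ S) {a b c : V} (ha : a ∈ S) (hb : b ∈ S) (hc : c ∈ S)
    (hab : a ≠ b) (hbc : b ≠ c) (habx : G.Between a b x) (hbcx : G.Between b c x) : False := by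
  have habc : G.Between a b c := habx.trans_right_left hG hbcx
  have hac : a ≠ c := by
    rintro rfl
    have := hG.pos_dist_of_ne hab
    simp only [Between, dist_self] at habc
    omega
  obtain ⟨p, hp, hbp, hpy⟩ := habc.exists_walk hG
  rcases hpy x (hS ha hc hb hac hab hbc.symm p hp hbp) with hx | hx
  · exact hxS ((habx.swap_right_iff hG).mp hx ▸ hb)
  · exact hxS ((hbcx.swap_right_iff hG).mp hx ▸ hc)

end SimpleGraph

/-- For a finite connected graph `G` and a vertex `x`,
`gp(G - x) ≤ 2·gp(G)`. -/
theorem stmt_0 {V : Type*} [Fintype V] [DecidableEq V] (G : SimpleGraph V)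
    (hG : G.Connected) (x : V) :
    gpNum (delVert G x) ≤ 2 * gpNum G := by
  obtain ⟨S, hS, hcard⟩ := exists_isGPSet_card_eq_gpNum (delVert G x)
  let T : Finset V := S.map (Function.Embedding.subtype _)
  have hT : IsGPSetExcept G x T := by simpa [T] using hS.isGPSetExcept_delVert
  have hxT : x ∉ T := by simp [T]
  obtain ⟨A, hAT, hA, hB⟩ := T.exists_isAntichain_isAntichain_sdiff
    (r := fun a b => G.Between a b x) fun a ha b hb c hc =>
      hT.not_between_between hG hxT ha hb hc
  have hA_le := ((hT.mono hAT).isGPSet_of_isAntichain hG hA).card_le_gpNum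
  have hB_le := ((hT.mono (Finset.coe_subset.mpr Finset.sdiff_subset)).isGPSet_of_isAntichain
    hG hB).card_le_gpNum
  have hsplit := Finset.card_sdiff_add_card_eq_card hAT
  have hTS : T.card = S.card := Finset.card_map _
  omega
end

section
/- For n ≥ 2, let S(K_{1,n}) be the graph obtained from the star K_{1,n} by subdividing each edge once, and let x be its vertex of degree n (the original center). Then gp(S(K_{1,n})) = n and gp(S(K_{1,n}) − x) = 2n; in particular gp(S(K_{1,n}) − x) = 2·gp(S(K_{1,n})). -/
open SimpleGraph

/-- The subdivided star `S(K_{1,n})`: center `none`, and for each `i : Fin n`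
a subdivision vertex `some (i, false)` (adjacent to the center) and a leaf
`some (i, true)` (adjacent to the subdivision vertex). -/
def subdividedStar (n : ℕ) : SimpleGraph (Option (Fin n × Bool)) :=
  SimpleGraph.fromRel (fun a b =>
    (a = none ∧ ∃ i : Fin n, b = some (i, false)) ∨
    (∃ i : Fin n, a = some (i, false) ∧ b = some (i, true)))

namespace SubStarAux

variable {n : ℕ}

abbrev G (n : ℕ) := subdividedStar n

lemma adj_cA (i : Fin n) : (G n).Adj none (some (i, false)) := by
  simp [subdividedStar, fromRel_adj]

lemma adj_AB (i : Fin n) : (G n).Adj (some (i, false)) (some (i, true)) := by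
  simp [subdividedStar, fromRel_adj]

lemma adj_cases {x y : Option (Fin n × Bool)} (h : (G n).Adj x y) :
    ∃ i : Fin n, (x = none ∧ y = some (i, false)) ∨ (y = none ∧ x = some (i, false)) ∨
      (x = some (i, false) ∧ y = some (i, true)) ∨ (y = some (i, false) ∧ x = some (i, true)) := by
  simp only [subdividedStar, fromRel_adj] at h
  rcases h.2 with (⟨h1, i, h2⟩ | ⟨i, h1, h2⟩) | (⟨h1, i, h2⟩ | ⟨i, h1, h2⟩)
  · exact ⟨i, Or.inl ⟨h1, h2⟩⟩
  · exact ⟨i, Or.inr (Or.inr (Or.inl ⟨h1, h2⟩))⟩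
  · exact ⟨i, Or.inr (Or.inl ⟨h1, h2⟩)⟩
  · exact ⟨i, Or.inr (Or.inr (Or.inr ⟨h1, h2⟩))⟩


lemma lip_walk (f : Option (Fin n × Bool) → ℤ)
    (hf : ∀ x y, (G n).Adj x y → |f x - f y| ≤ 1) :
    ∀ {u v} (p : (G n).Walk u v), |f u - f v| ≤ p.length := by
  intro u v p
  induction p with
  | nil => simp
  | cons h q ih =>
    rename_i a b c
    have t : |f a - f c| ≤ |f a - f b| + |f b - f c| := abs_sub_le _ _ _
    have := hf _ _ h
    simp only [SimpleGraph.Walk.length_cons]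
    push_cast
    linarith

lemma dist_eq_of_lip (f : Option (Fin n × Bool) → ℤ)
    (hf : ∀ x y, (G n).Adj x y → |f x - f y| ≤ 1) {u v} (p : (G n).Walk u v)
    (h : |f u - f v| = p.length) : (G n).dist u v = p.length := by
  refine le_antisymm (dist_le p) ?_
  obtain ⟨q, hq⟩ := p.reachable.exists_walk_length_eq_dist
  have := lip_walk f hf q
  rw [hq] at this
  rw [h] at this
  exact_mod_cast this

def F (j : Fin n) : Option (Fin n × Bool) → ℤ
  | none => 2
  | some (i, false) => if i = j then 1 else 3
  | some (i, true) => if i = j then 0 else 4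

lemma F_lip (j : Fin n) : ∀ x y, (G n).Adj x y → |F j x - F j y| ≤ 1 := by
  intro x y h
  obtain ⟨i, hc⟩ := adj_cases h
  rcases hc with ⟨h1, h2⟩ | ⟨h1, h2⟩ | ⟨h1, h2⟩ | ⟨h1, h2⟩ <;> subst h1 <;> subst h2 <;>
    simp only [F] <;> split_ifs <;> norm_num

-- explicit walks
def wCB (i : Fin n) : (G n).Walk none (some (i, true)) :=
  .cons (adj_cA i) (adj_AB i).toWalk

def wAA (i j : Fin n) : (G n).Walk (some (i, false)) (some (j, false)) :=
  .cons (adj_cA i).symm (adj_cA j).toWalk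

def wAB (i j : Fin n) : (G n).Walk (some (i, false)) (some (j, true)) :=
  .cons (adj_cA i).symm (wCB j)

def wBA (i j : Fin n) : (G n).Walk (some (i, true)) (some (j, false)) :=
  .cons (adj_AB i).symm (wAA i j)

def wBB (i j : Fin n) : (G n).Walk (some (i, true)) (some (j, true)) :=
  .cons (adj_AB i).symm (wAB i j)

lemma dist_cB (i : Fin n) : (G n).dist none (some (i, true)) = 2 := by
  have := dist_eq_of_lip (F i) (F_lip i) (wCB i) (by simp [F, wCB, Walk.length_cons])
  simpa [wCB] using this

lemma dist_AA {i j : Fin n} (hij : i ≠ j) :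
    (G n).dist (some (i, false)) (some (j, false)) = 2 := by
  have := dist_eq_of_lip (F j) (F_lip j) (wAA i j)
    (by simp [F, wAA, Walk.length_cons, hij])
  simpa [wAA] using this

lemma dist_AB {i j : Fin n} (hij : i ≠ j) :
    (G n).dist (some (i, false)) (some (j, true)) = 3 := by
  have := dist_eq_of_lip (F j) (F_lip j) (wAB i j)
    (by simp [F, wAB, wCB, Walk.length_cons, hij])
  simpa [wAB, wCB] using this

lemma dist_BA {i j : Fin n} (hij : i ≠ j) :
    (G n).dist (some (i, true)) (some (j, false)) = 3 := by
  have := dist_eq_of_lip (F i) (F_lip i) (wBA i j)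
    (by simp [F, wBA, wAA, Walk.length_cons, hij.symm])
  simpa [wBA, wAA] using this

lemma dist_BB {i j : Fin n} (hij : i ≠ j) :
    (G n).dist (some (i, true)) (some (j, true)) = 4 := by
  have := dist_eq_of_lip (F j) (F_lip j) (wBB i j)
    (by simp [F, wBB, wAB, wCB, Walk.length_cons, hij])
  simpa [wBB, wAB, wCB] using this


lemma path_cB (i : Fin n) : (wCB i).IsPath := by
  simp [wCB, Walk.isPath_def, Walk.support_cons]

lemma path_AA {i j : Fin n} (hij : i ≠ j) : (wAA i j).IsPath := by
  simp [wAA, Walk.isPath_def, Walk.support_cons, hij]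

lemma path_AB {i j : Fin n} (hij : i ≠ j) : (wAB i j).IsPath := by
  simp [wAB, wCB, Walk.isPath_def, Walk.support_cons, hij]

lemma path_BA {i j : Fin n} (hij : i ≠ j) : (wBA i j).IsPath := by
  simp [wBA, wAA, Walk.isPath_def, Walk.support_cons, hij]

lemma path_BB {i j : Fin n} (hij : i ≠ j) : (wBB i j).IsPath := by
  simp [wBB, wAB, wCB, Walk.isPath_def, Walk.support_cons, hij]

lemma triangle_of_mem {V : Type*} [DecidableEq V] {H : SimpleGraph V} {u v w : V} (p : H.Walk u v)
    (hl : p.length = H.dist u v) (hw : w ∈ p.support) :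
    H.dist u w + H.dist w v ≤ H.dist u v := by
  have h1 := dist_le (p.takeUntil w hw)
  have h2 := dist_le (p.dropUntil w hw)
  have h3 : (p.takeUntil w hw).length + (p.dropUntil w hw).length = p.length := by
    rw [← Walk.length_append, p.take_spec hw]
  omega


lemma leaves_gp :
    IsGPSet (G n) ↑((Finset.univ : Finset (Fin n)).image
      fun i => (some (i, true) : Option (Fin n × Bool))) := by
  intro u v w hu hv hw huv huw hvw p hp hlen hmem
  simp only [Finset.coe_image, Finset.coe_univ, Set.image_univ, Set.mem_range] at hu hv hw
  obtain ⟨i, rfl⟩ := hu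
  obtain ⟨j, rfl⟩ := hv
  obtain ⟨k, rfl⟩ := hw
  have hij : i ≠ j := fun h => huv (by rw [h])
  have hik : i ≠ k := fun h => huw (by rw [h])
  have hkj : k ≠ j := fun h => hvw (by rw [h])
  have := triangle_of_mem p hlen hmem
  rw [dist_BB hij, dist_BB hik, dist_BB hkj] at this
  omega

lemma gp_card_le (hn : 2 ≤ n) (S : Finset (Option (Fin n × Bool)))
    (hS : IsGPSet (G n) ↑S) : S.card ≤ n := by
  by_contra hlt
  push_neg at hlt
  have hAB : ∀ i : Fin n, ¬(some (i, false) ∈ S ∧ some (i, true) ∈ S) := by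
    rintro i ⟨hA, hB⟩
    obtain ⟨w, hwS, hw1, hw2⟩ : ∃ w ∈ S, w ≠ some (i, false) ∧ w ≠ some (i, true) := by
      by_contra hcon
      push_neg at hcon
      have hsub : S ⊆ {some (i, false), some (i, true)} := by
        intro x hx
        rcases eq_or_ne x (some (i, false)) with rfl | hne
        · simp
        · simp [hcon x hx hne]
      have h2 : S.card ≤ 2 := by
        refine (Finset.card_le_card hsub).trans ?_
        refine (Finset.card_insert_le _ _).trans ?_
        simp
      omega
    have hBmem : (some (i, true) : Option (Fin n × Bool)) ∈ (↑S : Set _) := hB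
    have hAmem : (some (i, false) : Option (Fin n × Bool)) ∈ (↑S : Set _) := hA
    have hwmem : w ∈ (↑S : Set _) := hwS
    match w, hw1, hw2, hwmem with
    | none, hw1, hw2, hwmem =>
      exact hS hwmem hBmem hAmem (by simp) (by simp) (by simp) (wCB i) (path_cB i)
        (by rw [dist_cB]; simp [wCB]) (by simp [wCB, Walk.support_cons])
    | some (j, false), hw1, hw2, hwmem =>
      have hji : j ≠ i := fun h => hw1 (by rw [h])
      exact hS hwmem hBmem hAmem (by simp [hji]) hw1 (by simp)
        (wAB j i) (path_AB hji) (by rw [dist_AB hji]; simp [wAB, wCB])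
        (by simp [wAB, wCB, Walk.support_cons])
    | some (j, true), hw1, hw2, hwmem =>
      have hji : j ≠ i := fun h => hw2 (by rw [h])
      exact hS hwmem hBmem hAmem (by simp [hji]) (by simp [hji]) (by simp)
        (wBB j i) (path_BB hji) (by rw [dist_BB hji]; simp [wBB, wAB, wCB])
        (by simp [wBB, wAB, wCB, Walk.support_cons])
  classical
  set φ : Option (Fin n × Bool) → Option (Fin n) := Option.map Prod.fst with hφ
  have hinj : Set.InjOn φ ↑S := by
    intro x hx y hy hxy
    match x, y with
    | none, none => rfl
    | none, some _ => simp [φ] at hxy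
    | some _, none => simp [φ] at hxy
    | some (i, b), some (j, b') =>
      simp only [φ, Option.map_some, Option.some.injEq] at hxy
      subst hxy
      rcases b <;> rcases b'
      · rfl
      · exact absurd ⟨hx, hy⟩ (hAB i)
      · exact absurd ⟨hy, hx⟩ (hAB i)
      · rfl
  have hcard : S.card ≤ n + 1 := by
    calc S.card = (S.image φ).card := (Finset.card_image_of_injOn hinj).symm
      _ ≤ Fintype.card (Option (Fin n)) := Finset.card_le_univ _
      _ = n + 1 := by simp
  have hceq : S.card = n + 1 := by omega
  have himg : S.image φ = Finset.univ := by
    apply Finset.eq_univ_of_card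
    rw [Finset.card_image_of_injOn hinj, hceq, Fintype.card_option, Fintype.card_fin]
  have hc : (none : Option (Fin n × Bool)) ∈ S := by
    have h : (none : Option (Fin n)) ∈ S.image φ := by rw [himg]; exact Finset.mem_univ _
    obtain ⟨x, hx, hxe⟩ := Finset.mem_image.mp h
    match x, hx, hxe with
    | none, hx, _ => exact hx
    | some _, _, hxe => simp [φ] at hxe
  have hget : ∀ m : Fin n, ∃ b : Bool, some (m, b) ∈ S := by
    intro m
    have h : (some m) ∈ S.image φ := by rw [himg]; exact Finset.mem_univ _
    obtain ⟨x, hx, hxe⟩ := Finset.mem_image.mp h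
    match x, hx, hxe with
    | none, _, hxe => simp [φ] at hxe
    | some (j, b), hx, hxe =>
      simp only [φ, Option.map_some, Option.some.injEq] at hxe
      subst hxe
      exact ⟨b, hx⟩
  obtain ⟨b0, h0⟩ := hget ⟨0, by omega⟩
  obtain ⟨b1, h1⟩ := hget ⟨1, by omega⟩
  have hne01 : (⟨0, by omega⟩ : Fin n) ≠ ⟨1, by omega⟩ := Fin.ne_of_val_ne (by simp)
  have h0' : (some (⟨0, by omega⟩, b0) : Option (Fin n × Bool)) ∈ (↑S : Set _) := h0
  have h1' : (some (⟨1, by omega⟩, b1) : Option (Fin n × Bool)) ∈ (↑S : Set _) := h1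
  have hc' : (none : Option (Fin n × Bool)) ∈ (↑S : Set _) := hc
  set i0 : Fin n := ⟨0, by omega⟩
  set i1 : Fin n := ⟨1, by omega⟩
  rcases b0 <;> rcases b1
  · exact hS h0' h1' hc' (by simp [hne01]) (by simp) (by simp) (wAA i0 i1) (path_AA hne01)
      (by rw [dist_AA hne01]; simp [wAA]) (by simp [wAA, Walk.support_cons])
  · exact hS h0' h1' hc' (by simp) (by simp) (by simp) (wAB i0 i1) (path_AB hne01)
      (by rw [dist_AB hne01]; simp [wAB, wCB]) (by simp [wAB, wCB, Walk.support_cons])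
  · exact hS h0' h1' hc' (by simp) (by simp) (by simp) (wBA i0 i1) (path_BA hne01)
      (by rw [dist_BA hne01]; simp [wBA, wAA]) (by simp [wBA, wAA, Walk.support_cons])
  · exact hS h0' h1' hc' (by simp [hne01]) (by simp) (by simp) (wBB i0 i1) (path_BB hne01)
      (by rw [dist_BB hne01]; simp [wBB, wAB, wCB]) (by simp [wBB, wAB, wCB, Walk.support_cons])


abbrev G' (n : ℕ) := delVert (subdividedStar n) none

def lg (y : {y : Option (Fin n × Bool) // y ≠ none}) : Fin n × Bool :=
  y.1.get (Option.ne_none_iff_isSome.mp y.2)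

lemma lg_spec (y : {y : Option (Fin n × Bool) // y ≠ none}) : y.1 = some (lg y) :=
  (Option.some_get _).symm

lemma adj' {u v : {y : Option (Fin n × Bool) // y ≠ none}} (h : (G' n).Adj u v) :
    (lg u).1 = (lg v).1 := by
  have h' : (G n).Adj u.1 v.1 := h
  obtain ⟨i, hc⟩ := adj_cases h'
  rcases hc with ⟨h1, h2⟩ | ⟨h1, h2⟩ | ⟨h1, h2⟩ | ⟨h1, h2⟩
  · exact absurd h1 u.2
  · exact absurd h1 v.2
  · have hu : lg u = (i, false) := by
      have := (lg_spec u).symm.trans h1; exact Option.some_injective _ this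
    have hv : lg v = (i, true) := by
      have := (lg_spec v).symm.trans h2; exact Option.some_injective _ this
    rw [hu, hv]
  · have hu : lg u = (i, true) := by
      have := (lg_spec u).symm.trans h2; exact Option.some_injective _ this
    have hv : lg v = (i, false) := by
      have := (lg_spec v).symm.trans h1; exact Option.some_injective _ this
    rw [hu, hv]

lemma leg_const {u v : {y : Option (Fin n × Bool) // y ≠ none}} (p : (G' n).Walk u v) :
    ∀ w ∈ p.support, (lg w).1 = (lg u).1 := by
  induction p with
  | nil =>
    intro w hw
    simp only [Walk.support_nil, List.mem_singleton] at hw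
    rw [hw]
  | cons h q ih =>
    intro w hw
    simp only [Walk.support_cons, List.mem_cons] at hw
    rcases hw with rfl | hw
    · rfl
    · rw [ih w hw, ← adj' h]

lemma univ_gp : IsGPSet (G' n) ↑(Finset.univ : Finset {y : Option (Fin n × Bool) // y ≠ none}) := by
  intro u v w hu hv hw huv huw hvw p hp hlen hmem
  have h2 := leg_const p w hmem
  have h3 := leg_const p v (Walk.end_mem_support p)
  have key : ∀ a b : {y : Option (Fin n × Bool) // y ≠ none}, lg a = lg b → a = b := by
    intro a b hab
    apply Subtype.ext
    rw [lg_spec a, lg_spec b, hab]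
  have hb : (lg u).2 = (lg v).2 ∨ (lg u).2 = (lg w).2 ∨ (lg v).2 = (lg w).2 := by
    cases hx : (lg u).2 <;> cases hy : (lg v).2 <;> cases hz : (lg w).2 <;> simp
  rcases hb with h | h | h
  · exact huv (key u v (Prod.ext_iff.mpr ⟨h3.symm, h⟩))
  · exact huw (key u w (Prod.ext_iff.mpr ⟨h2.symm, h⟩))
  · exact hvw (key v w (Prod.ext_iff.mpr ⟨h3.trans h2.symm, h⟩))

lemma card_V' : Fintype.card {y : Option (Fin n × Bool) // y ≠ none} = 2 * n := by
  have h := Fintype.card_subtype_compl (fun y : Option (Fin n × Bool) => y = none)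
  have h2 : Fintype.card {y : Option (Fin n × Bool) // y = none} = 1 :=
    Fintype.card_subtype_eq _
  have h3 : Fintype.card (Option (Fin n × Bool)) = 2 * n + 1 := by
    simp [Fintype.card_option, Fintype.card_prod]; ring
  rw [h2, h3] at h
  simpa using h

lemma gpNum_eq {V : Type*} [Fintype V] (H : SimpleGraph V) (k : ℕ)
    (h1 : ∃ S : Finset V, IsGPSet H ↑S ∧ S.card = k)
    (h2 : ∀ S : Finset V, IsGPSet H ↑S → S.card ≤ k) : gpNum H = k := by
  have hub : ∀ m ∈ {m : ℕ | ∃ S : Finset V, IsGPSet H ↑S ∧ S.card = m}, m ≤ k := by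
    rintro m ⟨S, hS, rfl⟩
    exact h2 S hS
  exact le_antisymm (csSup_le ⟨k, h1⟩ hub) (le_csSup ⟨k, hub⟩ h1)

end SubStarAux


/-- For `n ≥ 2`, `gp(S(K_{1,n})) = n`,
`gp(S(K_{1,n}) - x) = 2n` where `x` is the center, and in particular
`gp(S(K_{1,n}) - x) = 2·gp(S(K_{1,n}))`. -/
theorem stmt_1 (n : ℕ) (hn : 2 ≤ n) :
    gpNum (subdividedStar n) = n ∧
    gpNum (delVert (subdividedStar n) none) = 2 * n ∧
    gpNum (delVert (subdividedStar n) none) = 2 * gpNum (subdividedStar n) := by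
  have e1 : gpNum (subdividedStar n) = n := by
    apply SubStarAux.gpNum_eq
    · refine ⟨Finset.univ.image (fun i => some (i, true)), SubStarAux.leaves_gp, ?_⟩
      rw [Finset.card_image_of_injective _ (fun a b h => by simpa using h)]
      simp
    · exact fun S hS => SubStarAux.gp_card_le hn S hS
  have e2 : gpNum (delVert (subdividedStar n) none) = 2 * n := by
    apply SubStarAux.gpNum_eq
    · exact ⟨Finset.univ, SubStarAux.univ_gp, by rw [Finset.card_univ, SubStarAux.card_V']⟩
    · exact fun S _ => (Finset.card_le_univ S).trans
        (le_of_eq SubStarAux.card_V')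
  exact ⟨e1, e2, by rw [e1, e2]⟩
end

section
/- Let H be a finite connected graph and S an independent set of H with |S| = α(H), the independence number of H. Let G be the graph obtained from the disjoint union of H and a new vertex x by joining x to every vertex of S. Then gp(G) ≥ α(H). -/
open SimpleGraph

/-- The graph obtained from the disjoint union of `H` and a new vertex (`none`)
by joining the new vertex to every vertex of `S`. -/
def addVertexJoinedTo {W : Type*} (H : SimpleGraph W) (S : Finset W) :
    SimpleGraph (Option W) :=
  SimpleGraph.fromRel (fun a b =>
    (∃ s t : W, a = some s ∧ b = some t ∧ H.Adj s t) ∨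
    (a = none ∧ ∃ s ∈ S, b = some s))

lemma adj_some_some {W : Type*} {H : SimpleGraph W} {S : Finset W} {u v : W}
    (h : (addVertexJoinedTo H S).Adj (some u) (some v)) : H.Adj u v := by
  rw [addVertexJoinedTo, SimpleGraph.fromRel_adj] at h
  rcases h with ⟨-, (⟨s, t, hs, ht, hadj⟩ | ⟨h0, -⟩) | (⟨s, t, hs, ht, hadj⟩ | ⟨h0, -⟩)⟩
  · rw [Option.some.injEq] at hs ht; subst hs; subst ht; exact hadj
  · exact absurd h0 (by simp)
  · rw [Option.some.injEq] at hs ht; subst hs; subst ht; exact hadj.symm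
  · exact absurd h0 (by simp)

lemma adj_none_some {W : Type*} {H : SimpleGraph W} {S : Finset W} {s : W}
    (hs : s ∈ S) : (addVertexJoinedTo H S).Adj none (some s) := by
  rw [addVertexJoinedTo, SimpleGraph.fromRel_adj]
  exact ⟨by simp, Or.inl (Or.inr ⟨rfl, s, hs, rfl⟩)⟩

/-- If `S` is an independent set of a finite connected graph `H`
with `|S| = α(H)`, and `G` is obtained from `H` plus a new vertex `x` joined to
every vertex of `S`, then `gp(G) ≥ α(H)`. -/
theorem stmt_2 {W : Type*} [Fintype W] [DecidableEq W] (H : SimpleGraph W)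
    (hH : H.Connected) (S : Finset W)
    (hS_indep : ∀ a ∈ S, ∀ b ∈ S, ¬ H.Adj a b)
    (hS_max : ∀ T : Finset W, (∀ a ∈ T, ∀ b ∈ T, ¬ H.Adj a b) → T.card ≤ S.card) :
    S.card ≤ gpNum (addVertexJoinedTo H S) := by
  set G := addVertexJoinedTo H S with hG
  have hgp : IsGPSet G ↑(S.image some) := by
    intro u v w hu hv hw huv huw hvw p hp hlen hmem
    simp only [Finset.coe_image, Set.mem_image, Finset.mem_coe] at hu hv hw
    obtain ⟨u', hu', rfl⟩ := hu
    obtain ⟨v', hv', rfl⟩ := hv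
    obtain ⟨w', hw', rfl⟩ := hw
    -- distance between two members of S is at most 2, via `none`
    have hdist : G.dist (some u') (some v') ≤ 2 := by
      have := SimpleGraph.dist_le
        (Walk.cons (adj_none_some (H := H) hu').symm (Walk.cons (adj_none_some (H := H) hv') Walk.nil))
      simpa using this
    have hplen : p.length ≤ 2 := hlen ▸ hdist
    cases p with
    | nil => exact huv rfl
    | cons h q =>
      cases q with
      | nil =>
        -- length 1: u' and v' adjacent, contradicting independence
        exact hS_indep u' hu' v' hv' (adj_some_some h)
      | @cons m _ _ h' q' =>
        have hq' : q'.length = 0 := by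
          simp only [Walk.length_cons] at hplen
          omega
        cases q' with
        | nil =>
          simp only [Walk.support_cons, Walk.support_nil, List.mem_cons,
            List.not_mem_nil, or_false] at hmem
          rcases hmem with h1 | h1 | h1
          · exact huw h1.symm
          · subst h1
            exact hS_indep u' hu' w' hw' (adj_some_some h)
          · exact hvw h1.symm
        | cons _ _ => simp at hq'
  have hcard : (S.image some).card = S.card :=
    Finset.card_image_of_injective _ (Option.some_injective W)
  have hbdd : BddAbove {n : ℕ | ∃ T : Finset (Option W), IsGPSet G ↑T ∧ T.card = n} := by
    refine ⟨Fintype.card (Option W), ?_⟩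
    rintro n ⟨T, -, rfl⟩
    exact Finset.card_le_univ T
  calc S.card = (S.image some).card := hcard.symm
    _ ≤ gpNum G := le_csSup hbdd ⟨S.image some, hgp, rfl⟩
end

section
/- Let G be a finite connected graph and x a vertex of G. If x belongs to some general position set of G of maximum cardinality (a gp-set), then gp(G) − 1 ≤ gp(G − x). -/
/-!
Let `S` be a gp-set containing `x`. Since `S` is in general position, no geodesic of `G`
between two other vertices of `S` passes through `x`, so such geodesics survive in `G - x`
and distances between vertices of `S \ {x}` are the same in `G` and in `G - x`. Hence every
geodesic of `G - x` between two of them is a geodesic of `G`, and `S \ {x}` is in general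
position in `G - x`.
-/

open SimpleGraph

namespace SimpleGraph

variable {V V' : Type*} {G : SimpleGraph V} {G' : SimpleGraph V'}

lemma Reachable.dist_map_le (f : G' →g G) {u v : V'} (h : G'.Reachable u v) :
    G.dist (f u) (f v) ≤ G'.dist u v := by
  obtain ⟨p, hp⟩ := h.exists_walk_length_eq_dist
  calc G.dist (f u) (f v) ≤ (p.map f).length := dist_le _
    _ = G'.dist u v := by rw [Walk.length_map, hp]

def delVertEmbedding (G : SimpleGraph V) (x : V) : delVert G x ↪g G :=
  Embedding.comap (Function.Embedding.subtype _) G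

lemma Walk.exists_delVert_length_eq {x u v : V} (p : G.Walk u v) (hx : x ∉ p.support)
    (hu : u ≠ x) (hv : v ≠ x) :
    ∃ q : (delVert G x).Walk ⟨u, hu⟩ ⟨v, hv⟩, q.length = p.length := by
  have hp : ∀ y ∈ p.support, y ∈ {y | y ≠ x} := fun y hy hyx => hx (hyx ▸ hy)
  refine ⟨p.induce _ hp, ?_⟩
  have h := congrArg Walk.length (p.map_induce hp)
  rw [Walk.length_map] at h
  exact h

lemma dist_delVert_eq {x : V} (u v : {y : V // y ≠ x})
    (hgeod : ∀ p : G.Walk u v, p.IsPath → p.length = G.dist u v → x ∉ p.support) :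
    (delVert G x).dist u v = G.dist u v := by
  by_cases hr : G.Reachable u v
  · obtain ⟨p, hp, hlen⟩ := hr.exists_path_of_dist
    obtain ⟨q, hq⟩ := p.exists_delVert_length_eq (hgeod p hp hlen) u.2 v.2
    refine le_antisymm ?_ (Reachable.dist_map_le (delVertEmbedding G x).toHom ⟨q⟩)
    calc (delVert G x).dist u v ≤ q.length := dist_le q
      _ = G.dist u v := by rw [hq, hlen]
  · have hr' : ¬(delVert G x).Reachable u v := fun h => hr (h.map (delVertEmbedding G x).toHom)
    rw [dist_eq_zero_of_not_reachable hr, dist_eq_zero_of_not_reachable hr']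

end SimpleGraph

section

variable {V : Type*}

lemma IsGPSet.delVert_preimage {G : SimpleGraph V} {S : Set V} {x : V} (hS : IsGPSet G S)
    (hx : x ∈ S) : IsGPSet (delVert G x) (Subtype.val ⁻¹' S) := by
  intro u v w hu hv hw huv huw hvw p hp hlen hwp
  let f := (delVertEmbedding G x).toHom
  have hdist : (delVert G x).dist u v = G.dist u v :=
    dist_delVert_eq u v (hS hu hv hx (Subtype.coe_ne_coe.2 huv) u.2 v.2)
  refine hS hu hv hw (Subtype.coe_ne_coe.2 huv) (Subtype.coe_ne_coe.2 huw)
    (Subtype.coe_ne_coe.2 hvw) (p.map f) (hp.map (delVertEmbedding G x).injective) ?_ ?_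
  · exact (p.length_map f).trans (hlen.trans hdist)
  · exact (p.support_map f).symm ▸ List.mem_map_of_mem hwp

lemma card_le_gpNum [Fintype V] {G : SimpleGraph V} {S : Finset V} (hS : IsGPSet G ↑S) :
    S.card ≤ gpNum G :=
  le_csSup ⟨Fintype.card V, fun _ ⟨T, _, hT⟩ => hT ▸ T.card_le_univ⟩ ⟨S, hS, rfl⟩

end

theorem stmt_3_general {V : Type*} [Fintype V] [DecidableEq V] (G : SimpleGraph V)
    (x : V)
    (hx : ∃ S : Finset V, IsGPSet G ↑S ∧ S.card = gpNum G ∧ x ∈ S) :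
    gpNum G - 1 ≤ gpNum (delVert G x) := by
  obtain ⟨S, hS, hcard, hxS⟩ := hx
  have hT : IsGPSet (delVert G x) ↑(S.subtype (· ≠ x)) := by
    rw [show (↑(S.subtype (· ≠ x)) : Set {y : V // y ≠ x}) = Subtype.val ⁻¹' ↑S from
      Set.ext fun _ => Finset.mem_subtype]
    exact hS.delVert_preimage hxS
  have hcardT : (S.subtype (· ≠ x)).card = S.card - 1 := by
    rw [Finset.card_subtype, Finset.filter_ne', Finset.card_erase_of_mem hxS]
  have hle := card_le_gpNum hT
  omega

/-- If a vertex `x` of a finite connected graph `G` lies in some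
gp-set of `G` (a general position set of maximum cardinality), then
`gp(G) - 1 ≤ gp(G - x)`. -/
theorem stmt_3 {V : Type*} [Fintype V] [DecidableEq V] (G : SimpleGraph V)
    (hG : G.Connected) (x : V)
    (hx : ∃ S : Finset V, IsGPSet G ↑S ∧ S.card = gpNum G ∧ x ∈ S) :
    gpNum G - 1 ≤ gpNum (delVert G x) :=
  stmt_3_general G x hx
end

section
/- For n ≥ 3, let H_n be the graph with vertex set Y_{2n} ∪ {x, x'} ∪ Z_n, where Y_{2n} = {y_1,…,y_{2n}} induces a complete graph K_{2n}, the set {x,x'} ∪ Z_n with Z_n = {z_1,…,z_n} induces a complete bipartite graph K_{2,n} with parts {x,x'} and Z_n, the vertex x is additionally adjacent to y_1,…,y_n, and x' is additionally adjacent to y_{n+1}. Then gp(H_n) = 2n + 1 and gp(H_n − x) = 3n − 1. -/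
/-!
Lower bounds: in `H_n` the set `Z ∪ {y_1, …, y_{n+1}}`, and in `H_n − x` the set
`Z ∪ (Y ∖ {y_{n+1}})`, is in general position, since every triple `u, v, w` of it satisfies the
strict inequality `d(u,v) < d(u,w) + d(w,v)`.

Upper bounds: count `S ∩ Y`, `S ∩ {x, x'}` and `S ∩ Z` separately. Two vertices of `Z` exclude
`x` and `x'` (geodesics `z x z'`, `z x' z'`). A vertex `z ∈ S ∩ Z` is at distance `3` from every
`y_i` not adjacent to `x` or `x'`, along `z x y_k y_i` or `z x' y_{n+1} y_i`, so `S ∩ Y` cannot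
meet both the neighbours of `{x, x'}` and the other `y_i`; in `H_n − x` such a `y_i` also
excludes `x'`. Similarly `x ∈ S` keeps `S ∩ Y` inside `{y_1, …, y_n}` or outside it
(geodesics `x y_k y_i`).
-/

open SimpleGraph

/-- The graph `H_n`: vertices are `Sum.inl i` for `i : Fin (2n)` (the clique
`Y_{2n}`, with `y_j` corresponding to `i = j - 1`), `Sum.inr (Sum.inl false) = x`,
`Sum.inr (Sum.inl true) = x'`, and `Sum.inr (Sum.inr j)` for `j : Fin n`
(the set `Z_n`).  `Y_{2n}` induces `K_{2n}`; `{x, x'} ∪ Z_n` induces `K_{2,n}`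
with parts `{x, x'}` and `Z_n`; `x` is adjacent to `y_1, …, y_n`; and `x'` is
adjacent to `y_{n+1}`. -/
def Hgraph (n : ℕ) : SimpleGraph (Fin (2 * n) ⊕ (Bool ⊕ Fin n)) :=
  SimpleGraph.fromRel (fun a b =>
    match a, b with
    | Sum.inl _, Sum.inl _ => True
    | Sum.inr (Sum.inl _), Sum.inr (Sum.inr _) => True
    | Sum.inr (Sum.inl false), Sum.inl i => (i : ℕ) < n
    | Sum.inr (Sum.inl true), Sum.inl i => (i : ℕ) = n
    | _, _ => False)

open Finset

section General

variable {V : Type*} {G : SimpleGraph V} {S : Set V} {u v w a b : V}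

lemma SimpleGraph.Walk.dist_add_dist_le_length (p : G.Walk u v) (hw : w ∈ p.support) :
    G.dist u w + G.dist w v ≤ p.length := by
  classical
  exact calc G.dist u w + G.dist w v ≤ (p.takeUntil w hw).length + (p.dropUntil w hw).length :=
          add_le_add (dist_le _) (dist_le _)
      _ = p.length := by rw [← Walk.length_append, Walk.take_spec]

lemma SimpleGraph.dist_eq_two_of_adj_of_adj (hne : u ≠ v) (hnadj : ¬G.Adj u v)
    (hua : G.Adj u a) (hav : G.Adj a v) : G.dist u v = 2 :=
  le_antisymm (dist_le (.cons hua (.cons hav .nil)))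
    ((hua.reachable.trans hav.reachable).one_lt_dist_of_ne_of_not_adj hne hnadj)

lemma SimpleGraph.Reachable.three_le_dist (hr : G.Reachable u v) (hne : u ≠ v)
    (hnadj : ¬G.Adj u v) (hcommon : ∀ w, G.Adj u w → ¬G.Adj w v) : 3 ≤ G.dist u v := by
  have h : 2 < G.edist u v := two_lt_edist_iff.2 ⟨hne, hnadj,
    Set.eq_empty_of_forall_notMem fun w hw => hcommon w hw.1 hw.2.symm⟩
  rw [← hr.coe_dist_eq_edist] at h
  exact_mod_cast h

lemma SimpleGraph.dist_eq_three_of_adj_of_adj_of_adj (hne : u ≠ v) (hnadj : ¬G.Adj u v)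
    (hcommon : ∀ w, G.Adj u w → ¬G.Adj w v)
    (hua : G.Adj u a) (hab : G.Adj a b) (hbv : G.Adj b v) : G.dist u v = 3 :=
  let p : G.Walk u v := .cons hua (.cons hab (.cons hbv .nil))
  le_antisymm (dist_le p) (p.reachable.three_le_dist hne hnadj hcommon)

lemma isGPSet_of_dist_lt (h : ∀ u ∈ S, ∀ v ∈ S, ∀ w ∈ S, u ≠ v → w ≠ u → w ≠ v →
    G.dist u v < G.dist u w + G.dist w v) : IsGPSet G S :=
  fun u v w hu hv hw huv huw hvw p _ hp hwp =>
    (h u hu v hv w hw huv huw.symm hvw.symm).not_ge (hp ▸ p.dist_add_dist_le_length hwp)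

lemma IsGPSet.notMem_of_mem_support (hS : IsGPSet G S) (hu : u ∈ S) (hv : v ∈ S)
    (p : G.Walk u v) (hp : p.length ≤ G.dist u v) (hw : w ∈ p.support)
    (hwu : w ≠ u) (hwv : w ≠ v) : w ∉ S := by
  have hlen : p.length = G.dist u v := hp.antisymm (dist_le p)
  have huv : u ≠ v := by
    rintro rfl
    have h0 : G.dist u w = 0 := by
      have := p.dist_add_dist_le_length hw
      simp only [dist_self] at hlen
      omega
    classical
    exact hwu ((Reachable.dist_eq_zero_iff ⟨p.takeUntil w hw⟩).1 h0).symm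
  exact fun hwS => hS hu hv hwS huv hwu.symm hwv.symm p (p.isPath_of_length_eq_dist hlen) hlen hw

lemma IsGPSet.notMem_of_adj_of_adj (hS : IsGPSet G S) (hu : u ∈ S) (hv : v ∈ S)
    (hd : 2 ≤ G.dist u v) (hua : G.Adj u a) (hav : G.Adj a v) : a ∉ S :=
  hS.notMem_of_mem_support hu hv (.cons hua (.cons hav .nil)) hd (by simp) hua.ne' hav.ne

lemma IsGPSet.notMem_of_adj_of_adj_of_adj (hS : IsGPSet G S) (hu : u ∈ S) (hv : v ∈ S)
    (hd : 3 ≤ G.dist u v) (hua : G.Adj u a) (hab : G.Adj a b) (hbv : G.Adj b v) :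
    a ∉ S ∧ b ∉ S := by
  let p : G.Walk u v := .cons hua (.cons hab (.cons hbv .nil))
  have hav : a ≠ v := by
    rintro rfl
    rw [dist_eq_one_iff_adj.2 hua] at hd
    omega
  have hbu : b ≠ u := by
    rintro rfl
    rw [dist_eq_one_iff_adj.2 hbv] at hd
    omega
  exact ⟨hS.notMem_of_mem_support hu hv p hd (by simp [p]) hua.ne' hav,
    hS.notMem_of_mem_support hu hv p hd (by simp [p]) hbu hbv.ne⟩

lemma gpNum_eq_of_isGPSet_of_card_le [Fintype V] {k : ℕ} (T : Finset V) (hT : IsGPSet G T)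
    (hcard : #T = k) (hle : ∀ S : Finset V, IsGPSet G S → #S ≤ k) : gpNum G = k :=
  IsGreatest.csSup_eq ⟨⟨T, hT, hcard⟩, by rintro _ ⟨S, hS, rfl⟩; exact hle S hS⟩

end General

lemma Finset.card_eq_card_toLeft_add_card_toRight_toLeft_add_card_toRight_toRight
    {α β γ : Type*} (S : Finset (α ⊕ β ⊕ γ)) :
    #S = #S.toLeft + #S.toRight.toLeft + #S.toRight.toRight := by
  rw [add_assoc, card_toLeft_add_card_toRight, card_toLeft_add_card_toRight]

lemma Fin.card_le_max_of_forall_lt_imp_lt {m k : ℕ} (Y : Finset (Fin m))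
    (h : ∀ i ∈ Y, ∀ j ∈ Y, (i : ℕ) < k → (j : ℕ) < k) : #Y ≤ max k (m - k) := by
  have hlow := card_filter_val_lt (n := m) (m := k)
  have hsplit := card_filter_add_card_filter_not (s := (univ : Finset (Fin m)))
    (fun i : Fin m => (i : ℕ) < k)
  simp only [card_univ, Fintype.card_fin] at hsplit
  by_cases hY : ∃ i ∈ Y, (i : ℕ) < k
  · obtain ⟨i, hi, hik⟩ := hY
    have := card_le_card fun j (hj : j ∈ Y) => mem_filter.2 ⟨mem_univ j, h i hi j hj hik⟩
    omega
  · push Not at hY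
    have := card_le_card fun j (hj : j ∈ Y) =>
      mem_filter.2 ⟨mem_univ j, (hY j hj).not_gt⟩
    omega

namespace Hgraph

variable {n : ℕ}

abbrev y (i : Fin (2 * n)) : Fin (2 * n) ⊕ (Bool ⊕ Fin n) := .inl i
abbrev x (n : ℕ) : Fin (2 * n) ⊕ (Bool ⊕ Fin n) := .inr (.inl false)
abbrev x' (n : ℕ) : Fin (2 * n) ⊕ (Bool ⊕ Fin n) := .inr (.inl true)
abbrev z (j : Fin n) : Fin (2 * n) ⊕ (Bool ⊕ Fin n) := .inr (.inr j)

@[simp] lemma adj_y_y {i k : Fin (2 * n)} : (Hgraph n).Adj (y i) (y k) ↔ i ≠ k := by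
  simp [Hgraph]
@[simp] lemma adj_x_y {i : Fin (2 * n)} : (Hgraph n).Adj (x n) (y i) ↔ (i : ℕ) < n := by
  simp [Hgraph]
@[simp] lemma adj_x'_y {i : Fin (2 * n)} : (Hgraph n).Adj (x' n) (y i) ↔ (i : ℕ) = n := by
  simp [Hgraph]
@[simp] lemma adj_z_x (j : Fin n) : (Hgraph n).Adj (z j) (x n) := by simp [Hgraph]
@[simp] lemma adj_z_x' (j : Fin n) : (Hgraph n).Adj (z j) (x' n) := by simp [Hgraph]
@[simp] lemma not_adj_y_z {i : Fin (2 * n)} {j : Fin n} : ¬(Hgraph n).Adj (y i) (z j) := by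
  simp [Hgraph]
@[simp] lemma not_adj_z_z {j k : Fin n} : ¬(Hgraph n).Adj (z j) (z k) := by simp [Hgraph]

lemma adj_z {j : Fin n} {v} (h : (Hgraph n).Adj (z j) v) : v = x n ∨ v = x' n := by
  rcases v with i | b | k
  · simp [Hgraph] at h
  · cases b <;> simp
  · simp at h

lemma dist_y_y {i k : Fin (2 * n)} (h : i ≠ k) : (Hgraph n).dist (y i) (y k) = 1 :=
  dist_eq_one_iff_adj.2 (adj_y_y.2 h)

lemma dist_y_z {i : Fin (2 * n)} (hi : (i : ℕ) < n + 1) (j : Fin n) :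
    (Hgraph n).dist (y i) (z j) = 2 := by
  rcases Nat.lt_succ_iff_lt_or_eq.1 hi with hi | hi
  · exact dist_eq_two_of_adj_of_adj (by simp) not_adj_y_z (adj_x_y.2 hi).symm (adj_z_x j).symm
  · exact dist_eq_two_of_adj_of_adj (by simp) not_adj_y_z (adj_x'_y.2 hi).symm (adj_z_x' j).symm

lemma dist_z_y {i : Fin (2 * n)} (hi : (i : ℕ) < n + 1) (j : Fin n) :
    (Hgraph n).dist (z j) (y i) = 2 := by
  rw [dist_comm, dist_y_z hi]

lemma dist_z_z {j k : Fin n} (h : j ≠ k) : (Hgraph n).dist (z j) (z k) = 2 :=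
  dist_eq_two_of_adj_of_adj (by simpa using h) not_adj_z_z (adj_z_x j) (adj_z_x k).symm

lemma three_le_dist_z_y (j : Fin n) {i : Fin (2 * n)} (hi : n < (i : ℕ)) :
    3 ≤ (Hgraph n).dist (z j) (y i) := by
  have hyn : (Hgraph n).Adj (x' n) (y ⟨n, by omega⟩) := adj_x'_y.2 rfl
  have hyi : (Hgraph n).Adj (y ⟨n, by omega⟩) (y i) := adj_y_y.2 (by simp [Fin.ext_iff]; omega)
  refine ((adj_z_x' j).reachable.trans (hyn.reachable.trans hyi.reachable)).three_le_dist
    (by simp) (by simp [Hgraph]) fun v hv hvy => ?_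
  rcases adj_z hv with rfl | rfl
  · exact (adj_x_y.1 hvy).not_gt hi
  · exact hi.ne' (adj_x'_y.1 hvy)

def gpSet (n : ℕ) : Finset (Fin (2 * n) ⊕ (Bool ⊕ Fin n)) :=
  ({i | (i : ℕ) < n + 1} : Finset (Fin (2 * n))).disjSum ((∅ : Finset Bool).disjSum univ)

lemma card_gpSet (hn : 1 ≤ n) : #(gpSet n) = 2 * n + 1 := by
  simp only [gpSet, card_disjSum, Fin.card_filter_val_lt, card_empty, card_univ, Fintype.card_fin]
  omega

lemma isGPSet_gpSet : IsGPSet (Hgraph n) (gpSet n : Set _) := by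
  refine isGPSet_of_dist_lt ?_
  rintro (i | b | j) hu (k | c | l) hv (m | d | o) hw huv hwu hwv <;>
    simp_all [gpSet, dist_y_y, dist_y_z, dist_z_y, dist_z_z, Ne.symm]

section UpperBound

variable {S : Set (Fin (2 * n) ⊕ (Bool ⊕ Fin n))}

lemma x_x'_notMem_of_z_mem_of_z_mem (hS : IsGPSet (Hgraph n) S) {j k : Fin n} (hjk : j ≠ k)
    (hj : z j ∈ S) (hk : z k ∈ S) : x n ∉ S ∧ x' n ∉ S :=
  ⟨hS.notMem_of_adj_of_adj hj hk (dist_z_z hjk).ge (adj_z_x j) (adj_z_x k).symm,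
    hS.notMem_of_adj_of_adj hj hk (dist_z_z hjk).ge (adj_z_x' j) (adj_z_x' k).symm⟩

lemma lt_of_z_mem_of_y_mem (hS : IsGPSet (Hgraph n) S) {j : Fin n} {i k : Fin (2 * n)}
    (hj : z j ∈ S) (hk : y k ∈ S) (hkn : (k : ℕ) < n + 1) (hi : y i ∈ S) : (i : ℕ) < n + 1 := by
  by_contra! hin
  have hd := three_le_dist_z_y j (i := i) hin
  have hki : (Hgraph n).Adj (y k) (y i) := adj_y_y.2 (by simp [Fin.ext_iff]; omega)
  rcases Nat.lt_succ_iff_lt_or_eq.1 hkn with hkn | hkn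
  · exact (hS.notMem_of_adj_of_adj_of_adj hj hi hd (adj_z_x j) (adj_x_y.2 hkn) hki).2 hk
  · exact (hS.notMem_of_adj_of_adj_of_adj hj hi hd (adj_z_x' j) (adj_x'_y.2 hkn) hki).2 hk

lemma lt_of_x_mem_of_y_mem (hS : IsGPSet (Hgraph n) S) {i k : Fin (2 * n)}
    (hx : x n ∈ S) (hk : y k ∈ S) (hkn : (k : ℕ) < n) (hi : y i ∈ S) : (i : ℕ) < n := by
  by_contra! hin
  have hki : (Hgraph n).Adj (y k) (y i) := adj_y_y.2 (by simp [Fin.ext_iff]; omega)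
  have hd := dist_eq_two_of_adj_of_adj (by simp) (by simpa using hin) (adj_x_y.2 hkn) hki
  exact hS.notMem_of_adj_of_adj hx hi hd.ge (adj_x_y.2 hkn) hki hk

end UpperBound

lemma card_le_of_isGPSet (hn : 3 ≤ n) (S : Finset (Fin (2 * n) ⊕ (Bool ⊕ Fin n)))
    (hS : IsGPSet (Hgraph n) S) : #S ≤ 2 * n + 1 := by
  rw [card_eq_card_toLeft_add_card_toRight_toLeft_add_card_toRight_toRight]
  have hY : #S.toLeft ≤ 2 * n := by simpa using card_le_univ S.toLeft
  have hX : #S.toRight.toLeft ≤ 2 := by simpa using card_le_univ S.toRight.toLeft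
  have hZ : #S.toRight.toRight ≤ n := by simpa using card_le_univ S.toRight.toRight
  rcases S.toRight.toRight.eq_empty_or_nonempty with hZ0 | ⟨j, hj⟩
  · rw [card_eq_zero.2 hZ0]
    by_cases hx : x n ∈ S
    · have := Fin.card_le_max_of_forall_lt_imp_lt S.toLeft (k := n) fun k hk i hi hkn =>
        lt_of_x_mem_of_y_mem hS hx (mem_toLeft.1 hk) hkn (mem_toLeft.1 hi)
      omega
    · have := card_lt_univ_of_notMem (x := false) (s := S.toRight.toLeft) (by simpa using hx)
      simp only [Fintype.card_bool] at this
      omega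
  · have hj : z j ∈ S := by simpa using hj
    have := Fin.card_le_max_of_forall_lt_imp_lt S.toLeft (k := n + 1) fun k hk i hi hkn =>
      lt_of_z_mem_of_y_mem hS hj (mem_toLeft.1 hk) hkn (mem_toLeft.1 hi)
    rcases le_or_gt #S.toRight.toRight 1 with hZ1 | hZ1
    · omega
    · obtain ⟨j, hj, k, hk, hjk⟩ := one_lt_card.1 hZ1
      obtain ⟨hx, hx'⟩ :=
        x_x'_notMem_of_z_mem_of_z_mem hS hjk (by simpa using hj) (by simpa using hk)
      have : S.toRight.toLeft = ∅ := eq_empty_of_forall_notMem fun b hb => by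
        cases b
        · exact hx (by simpa using hb)
        · exact hx' (by simpa using hb)
      rw [this, card_empty]
      omega

lemma gpNum_eq (hn : 3 ≤ n) : gpNum (Hgraph n) = 2 * n + 1 :=
  gpNum_eq_of_isGPSet_of_card_le _ isGPSet_gpSet (card_gpSet (by omega)) (card_le_of_isGPSet hn)

abbrev delX (n : ℕ) : SimpleGraph {v : Fin (2 * n) ⊕ (Bool ⊕ Fin n) // v ≠ x n} :=
  delVert (Hgraph n) (x n)

namespace delX

abbrev y (i : Fin (2 * n)) : {v // v ≠ x n} := ⟨.inl i, Sum.inl_ne_inr⟩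
abbrev x' (n : ℕ) : {v : Fin (2 * n) ⊕ (Bool ⊕ Fin n) // v ≠ x n} := ⟨.inr (.inl true), by simp⟩
abbrev z (j : Fin n) : {v // v ≠ x n} := ⟨.inr (.inr j), by simp⟩

@[simp] lemma adj_y_y {i k : Fin (2 * n)} : (delX n).Adj (y i) (y k) ↔ i ≠ k := Hgraph.adj_y_y
@[simp] lemma adj_x'_y {i : Fin (2 * n)} : (delX n).Adj (x' n) (y i) ↔ (i : ℕ) = n :=
  Hgraph.adj_x'_y
@[simp] lemma adj_z_x' (j : Fin n) : (delX n).Adj (z j) (x' n) := Hgraph.adj_z_x' j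
@[simp] lemma not_adj_y_z {i : Fin (2 * n)} {j : Fin n} : ¬(delX n).Adj (y i) (z j) :=
  Hgraph.not_adj_y_z
@[simp] lemma not_adj_z_z {j k : Fin n} : ¬(delX n).Adj (z j) (z k) := Hgraph.not_adj_z_z

lemma adj_z {j : Fin n} {v} (h : (delX n).Adj (z j) v) : v = x' n :=
  (Hgraph.adj_z h).resolve_left v.2 |> Subtype.ext

lemma dist_y_y {i k : Fin (2 * n)} (h : i ≠ k) : (delX n).dist (y i) (y k) = 1 :=
  dist_eq_one_iff_adj.2 (adj_y_y.2 h)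

lemma dist_z_z {j k : Fin n} (h : j ≠ k) : (delX n).dist (z j) (z k) = 2 :=
  dist_eq_two_of_adj_of_adj (by simpa using h) not_adj_z_z (adj_z_x' j) (adj_z_x' k).symm

lemma dist_z_y (j : Fin n) {i : Fin (2 * n)} (hi : (i : ℕ) ≠ n) :
    (delX n).dist (z j) (y i) = 3 :=
  dist_eq_three_of_adj_of_adj_of_adj (by simp) (not_adj_y_z ·.symm)
    (fun v hv hvy => hi (adj_x'_y.1 (adj_z hv ▸ hvy))) (adj_z_x' j)
    (adj_x'_y.2 (rfl : ((⟨n, by omega⟩ : Fin (2 * n)) : ℕ) = n))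
    (adj_y_y.2 (by simp [Fin.ext_iff]; omega))

lemma dist_y_z {i : Fin (2 * n)} (hi : (i : ℕ) ≠ n) (j : Fin n) :
    (delX n).dist (y i) (z j) = 3 := by
  rw [dist_comm, dist_z_y j hi]

def gpSet (n : ℕ) : Finset {v : Fin (2 * n) ⊕ (Bool ⊕ Fin n) // v ≠ x n} :=
  (({i | (i : ℕ) ≠ n} : Finset (Fin (2 * n))).disjSum ((∅ : Finset Bool).disjSum univ)).subtype
    (· ≠ x n)

lemma card_gpSet (hn : 1 ≤ n) : #(gpSet n) = 3 * n - 1 := by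
  have hY : ({i | (i : ℕ) ≠ n} : Finset (Fin (2 * n))) = univ.erase ⟨n, by omega⟩ := by
    ext i
    simp [Fin.ext_iff]
  rw [gpSet, card_subtype, filter_true_of_mem (by simp), card_disjSum, card_disjSum, hY,
    card_erase_of_mem (mem_univ _)]
  simp only [card_univ, Fintype.card_fin, card_empty]
  omega

lemma isGPSet_gpSet : IsGPSet (delX n) (gpSet n : Set _) := by
  refine isGPSet_of_dist_lt ?_
  rintro ⟨i | b | j, _⟩ hu ⟨k | c | l, _⟩ hv ⟨m | d | o, _⟩ hw huv hwu hwv <;>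
    simp_all [gpSet, dist_y_y, dist_y_z, dist_z_y, dist_z_z, Ne.symm]

variable {S : Set {v : Fin (2 * n) ⊕ (Bool ⊕ Fin n) // v ≠ x n}} in
lemma x'_notMem_and_y_notMem_of_z_mem (hS : IsGPSet (delX n) S) {j : Fin n} {i k : Fin (2 * n)}
    (hj : z j ∈ S) (hi : y i ∈ S) (hin : (i : ℕ) ≠ n) (hkn : (k : ℕ) = n) :
    x' n ∉ S ∧ y k ∉ S :=
  hS.notMem_of_adj_of_adj_of_adj hj hi (dist_z_y j hin).ge (adj_z_x' j) (adj_x'_y.2 hkn)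
    (adj_y_y.2 (by simp [Fin.ext_iff]; omega))

lemma card_le_of_isGPSet (hn : 3 ≤ n) (S : Finset {v : Fin (2 * n) ⊕ (Bool ⊕ Fin n) // v ≠ x n})
    (hS : IsGPSet (delX n) S) : #S ≤ 3 * n - 1 := by
  rw [← card_map (.subtype _), card_eq_card_toLeft_add_card_toRight_toLeft_add_card_toRight_toRight]
  set T := S.map (.subtype fun v => v ≠ x n)
  have hY : #T.toLeft ≤ 2 * n := by simpa using card_le_univ T.toLeft
  have hX : #T.toRight.toLeft ≤ 1 := by
    have := card_lt_univ_of_notMem (x := false) (s := T.toRight.toLeft) (by simp [T])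
    simpa using this
  have hZ : #T.toRight.toRight ≤ n := by simpa using card_le_univ T.toRight.toRight
  rcases T.toRight.toRight.eq_empty_or_nonempty with hZ0 | ⟨j, hj⟩
  · rw [card_eq_zero.2 hZ0]
    omega
  have hj : z j ∈ S := by simpa [T] using hj
  by_cases hY' : ∃ i ∈ T.toLeft, (i : ℕ) ≠ n
  · obtain ⟨i, hi, hin⟩ := hY'
    obtain ⟨hx', hyn⟩ := x'_notMem_and_y_notMem_of_z_mem hS (k := ⟨n, by omega⟩) hj
      (by simpa [T] using hi) hin rfl
    have hX0 : T.toRight.toLeft = ∅ := eq_empty_of_forall_notMem fun b hb => by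
      cases b
      · simp [T] at hb
      · exact hx' (by simpa [T] using hb)
    have hYn := card_lt_univ_of_notMem (x := ⟨n, by omega⟩) (s := T.toLeft) (by simpa [T] using hyn)
    simp only [Fintype.card_fin] at hYn
    rw [hX0, card_empty]
    omega
  · push Not at hY'
    have : #T.toLeft ≤ 1 :=
      card_le_one.2 fun a ha b hb => Fin.ext ((hY' a ha).trans (hY' b hb).symm)
    omega

end delX

lemma gpNum_delX_eq (hn : 3 ≤ n) : gpNum (delX n) = 3 * n - 1 :=
  gpNum_eq_of_isGPSet_of_card_le _ delX.isGPSet_gpSet (delX.card_gpSet (by omega))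
    (delX.card_le_of_isGPSet hn)

end Hgraph

/-- For `n ≥ 3`, `gp(H_n) = 2n + 1` and `gp(H_n - x) = 3n - 1`. -/
theorem stmt_4 (n : ℕ) (hn : 3 ≤ n) :
    gpNum (Hgraph n) = 2 * n + 1 ∧
    gpNum (delVert (Hgraph n) (Sum.inr (Sum.inl false))) = 3 * n - 1 :=
  ⟨Hgraph.gpNum_eq hn, Hgraph.gpNum_delX_eq hn⟩
end

section
/- Let G be a finite connected graph of diameter 2 and x a vertex of G. Then gp(G − x) ≤ gp(G). -/
open SimpleGraph

lemma gp_image {V : Type*} [DecidableEq V] (G : SimpleGraph V)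
    (hG : G.Connected) (hdiam : G.diam = 2) (x : V)
    (S : Finset {y : V // y ≠ x}) (hS : IsGPSet (delVert G x) ↑S) :
    IsGPSet G ↑(S.image Subtype.val) := by
  intro u v w hu hv hw huv huw hvw p hp hlen hwsup
  simp only [Finset.coe_image, Set.mem_image, Finset.mem_coe] at hu hv hw
  obtain ⟨u', hu', hue⟩ := hu
  obtain ⟨v', hv', hve⟩ := hv
  obtain ⟨w', hw', hwe⟩ := hw
  have hne : G.ediam ≠ ⊤ := ediam_ne_top_of_diam_ne_zero (by omega)
  have hle : G.dist u v ≤ 2 := hdiam ▸ dist_le_diam hne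
  have hpos : 0 < G.dist u v :=
    hG.pos_dist_of_ne huv
  interval_cases h : G.dist u v
  · -- dist = 1 : p has length 1
    cases p with
    | nil => simp only [SimpleGraph.Walk.length_nil] at hlen; omega
    | cons ha q =>
      cases q with
      | nil =>
        simp only [SimpleGraph.Walk.support_cons, SimpleGraph.Walk.support_nil,
          List.mem_cons, List.mem_singleton] at hwsup
        rcases hwsup with h1 | h1 | h1
        · exact absurd h1.symm huw
        · exact absurd h1.symm hvw
        · simp at h1
      | cons hb r =>
        simp only [SimpleGraph.Walk.length_cons] at hlen; omega
  · -- dist = 2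
    cases p with
    | nil => simp only [SimpleGraph.Walk.length_nil] at hlen; omega
    | cons ha q =>
      cases q with
      | nil => simp only [SimpleGraph.Walk.length_cons, SimpleGraph.Walk.length_nil] at hlen; omega
      | cons hb r =>
        cases r with
        | cons hc s =>
          simp only [SimpleGraph.Walk.length_cons] at hlen; omega
        | nil =>
          rename_i m
          -- p = u' - m - v'
          simp only [SimpleGraph.Walk.support_cons, SimpleGraph.Walk.support_nil,
            List.mem_cons, List.mem_singleton] at hwsup
          have hwm : w = m := by
            rcases hwsup with h1 | h1 | h1 | h1
            · exact absurd h1.symm huw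
            · exact h1
            · exact absurd h1.symm hvw
            · simp at h1
          subst hwm
          -- build geodesic in delVert
          have ha' : (delVert G x).Adj u' w' := by
            show G.Adj u' w'; rw [hue, hwe]; exact ha
          have hb' : (delVert G x).Adj w' v' := by
            show G.Adj w' v'; rw [hwe, hve]; exact hb
          have huv' : u' ≠ v' := fun h1 => huv (hue ▸ hve ▸ congrArg Subtype.val h1)
          have huw' : u' ≠ w' := fun h1 => huw (hue ▸ hwe ▸ congrArg Subtype.val h1)
          have hvw' : v' ≠ w' := fun h1 => hvw (hve ▸ hwe ▸ congrArg Subtype.val h1)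
          let q : (delVert G x).Walk u' v' := .cons ha' (.cons hb' .nil)
          have hqpath : q.IsPath := by
            simp [q, SimpleGraph.Walk.isPath_def, huv', huw', hvw'.symm]
          have hd2 : (delVert G x).dist u' v' = 2 := by
            have h1 : (delVert G x).dist u' v' ≤ 2 := SimpleGraph.dist_le q
            have h0 : (delVert G x).dist u' v' ≠ 0 :=
              (SimpleGraph.Reachable.pos_dist_of_ne ⟨q⟩ huv').ne'
            have hne1 : (delVert G x).dist u' v' ≠ 1 := by
              intro h1'
              have : (delVert G x).Adj u' v' := SimpleGraph.dist_eq_one_iff_adj.mp h1'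
              have : G.Adj u' v' := this
              have h2 := SimpleGraph.dist_eq_one_iff_adj.mpr this
              rw [hue, hve] at h2
              omega
            omega
          have := hS hu' hv' hw' huv' huw' hvw' q hqpath (by simp [q, hd2])
          exact this (by simp [q])

/-- If `G` is a finite connected graph of diameter 2 and `x` a
vertex of `G`, then `gp(G - x) ≤ gp(G)`. -/
theorem stmt_6 {V : Type*} [Fintype V] [DecidableEq V] (G : SimpleGraph V)
    (hG : G.Connected) (hdiam : G.diam = 2) (x : V) :
    gpNum (delVert G x) ≤ gpNum G := by
  unfold gpNum
  have hnonempty : {n : ℕ | ∃ S : Finset {y : V // y ≠ x},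
      IsGPSet (delVert G x) ↑S ∧ S.card = n}.Nonempty :=
    ⟨0, ∅, by intro u v w hu; simp at hu, rfl⟩
  apply csSup_le hnonempty
  rintro n ⟨S, hS, rfl⟩
  have hmem : S.card ∈ {n : ℕ | ∃ T : Finset V, IsGPSet G ↑T ∧ T.card = n} :=
    ⟨S.image Subtype.val, gp_image G hG hdiam x S hS,
      Finset.card_image_of_injective S Subtype.val_injective⟩
  exact le_csSup ⟨Fintype.card V, fun m ⟨T, _, hT⟩ => hT ▸ T.card_le_univ⟩ hmem
end

section
/- For k ≥ 3 and n_1 ≥ … ≥ n_k ≥ 2, let G be the graph obtained from the disjoint union of complete graphs K_{n_1},…,K_{n_k} by selecting one vertex from each and identifying all selected vertices into a single vertex c. Then gp(G) = n_1 + ⋯ + n_k − k, and for every vertex x ≠ c of G, gp(G − x) = gp(G) − 1. -/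
open SimpleGraph

/-- The graph obtained from the disjoint union of complete graphs
`K_{n 0}, …, K_{n (k-1)}` by selecting one vertex in each and identifying all
selected vertices into a single vertex `none`; the remaining `n i - 1`
vertices of the `i`-th clique are `some ⟨i, a⟩` for `a : Fin (n i - 1)`. -/
def cliqueBouquet (k : ℕ) (n : Fin k → ℕ) :
    SimpleGraph (Option (Σ i : Fin k, Fin (n i - 1))) :=
  SimpleGraph.fromRel (fun a b =>
    a = none ∨
    ∃ (i : Fin k) (s t : Fin (n i - 1)), a = some ⟨i, s⟩ ∧ b = some ⟨i, t⟩)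

lemma mid_lemma {V : Type*} (G : SimpleGraph V) {u v w : V} (p : G.Walk u v)
    (hw : w ∈ p.support) (hu : w ≠ u) (hv : w ≠ v) :
    G.dist u w + G.dist w v ≤ p.length ∧ 1 ≤ G.dist u w ∧ 1 ≤ G.dist w v := by
  classical
  have hspec := p.take_spec hw
  have hlen : (p.takeUntil w hw).length + (p.dropUntil w hw).length = p.length := by
    rw [← SimpleGraph.Walk.length_append, hspec]
  have h1 : G.dist u w ≤ (p.takeUntil w hw).length := SimpleGraph.dist_le _
  have h2 : G.dist w v ≤ (p.dropUntil w hw).length := SimpleGraph.dist_le _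
  refine ⟨by omega, ?_, ?_⟩
  · exact SimpleGraph.Reachable.pos_dist_of_ne ⟨p.takeUntil w hw⟩ (Ne.symm hu)
  · exact SimpleGraph.Reachable.pos_dist_of_ne ⟨p.dropUntil w hw⟩ hv

lemma gpNum_eq_of {V : Type*} [Fintype V] (G : SimpleGraph V) (M : ℕ) (S : Finset V)
    (hS : IsGPSet G ↑S) (hc : S.card = M)
    (hmax : ∀ T : Finset V, IsGPSet G ↑T → T.card ≤ M) : gpNum G = M := by
  apply le_antisymm
  · exact csSup_le ⟨M, S, hS, hc⟩ (by rintro m ⟨T, hT, rfl⟩; exact hmax T hT)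
  · exact le_csSup ⟨M, by rintro m ⟨T, hT, rfl⟩; exact hmax T hT⟩ ⟨S, hS, hc⟩

/-- Abstract lemma: a universal vertex `c`, other vertices adjacent iff same label. -/
lemma key_lemma {V : Type*} [Fintype V] [DecidableEq V] (G : SimpleGraph V) (c : V)
    {ι : Type*} (f : V → ι)
    (hadj_c : ∀ y, y ≠ c → G.Adj c y)
    (hadj : ∀ u v : V, u ≠ c → v ≠ c → u ≠ v → (G.Adj u v ↔ f u = f v))
    (u₀ v₀ : V) (hu₀ : u₀ ≠ c) (hv₀ : v₀ ≠ c) (hf₀ : f u₀ ≠ f v₀) :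
    gpNum G = Fintype.card V - 1 := by
  have hu₀v₀ : u₀ ≠ v₀ := fun h => hf₀ (by rw [h])
  -- distance 2 between vertices with different labels
  have hdist2 : ∀ u v : V, u ≠ c → v ≠ c → u ≠ v → f u ≠ f v → G.dist u v = 2 := by
    intro u v hu hv huv hf
    have hnadj : ¬ G.Adj u v := fun h => hf ((hadj u v hu hv huv).mp h)
    let hw : G.Walk u v := .cons ((hadj_c u hu).symm) (.cons (hadj_c v hv) .nil)
    have hle : G.dist u v ≤ 2 := by
      have := SimpleGraph.dist_le hw
      simpa [hw] using this
    have h0 : G.dist u v ≠ 0 := by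
      have := SimpleGraph.Reachable.pos_dist_of_ne ⟨hw⟩ huv
      omega
    have h1 : G.dist u v ≠ 1 := fun h => hnadj (SimpleGraph.dist_eq_one_iff_adj.mp h)
    omega
  set S : Finset V := Finset.univ.erase c with hSdef
  have hcardS : S.card = Fintype.card V - 1 := by
    rw [hSdef, Finset.card_erase_of_mem (Finset.mem_univ c), Finset.card_univ]
  have hSgp : IsGPSet G ↑S := by
    intro u v w hu hv hw huv huw hvw p hp hl
    simp only [hSdef, Finset.coe_erase, Set.mem_diff, Finset.coe_univ, Set.mem_univ,
      Set.mem_singleton_iff, true_and] at hu hv hw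
    intro hmem
    have hm := mid_lemma G p hmem (Ne.symm huw) (Ne.symm hvw)
    by_cases hfuv : f u = f v
    · have : G.dist u v = 1 := SimpleGraph.dist_eq_one_iff_adj.mpr
        ((hadj u v hu hv huv).mpr hfuv)
      omega
    · have hd2 : G.dist u v = 2 := hdist2 u v hu hv huv hfuv
      have hduw : G.dist u w = 1 := by omega
      have hdwv : G.dist w v = 1 := by omega
      have h1 : f u = f w := (hadj u w hu hw huw).mp (SimpleGraph.dist_eq_one_iff_adj.mp hduw)
      have h2 : f w = f v := (hadj w v hw hv (Ne.symm hvw)).mp (SimpleGraph.dist_eq_one_iff_adj.mp hdwv)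
      exact hfuv (h1.trans h2)
  refine gpNum_eq_of G _ S hSgp hcardS ?_
  intro T hT
  by_contra hcard
  push_neg at hcard
  have hTcard : T.card = Fintype.card V := by
    have := T.card_le_univ
    omega
  have hTuniv : T = Finset.univ := Finset.eq_univ_of_card T hTcard
  have hmemT : ∀ y : V, y ∈ (↑T : Set V) := by intro y; simp [hTuniv]
  let hp : G.Walk u₀ v₀ := .cons ((hadj_c u₀ hu₀).symm) (.cons (hadj_c v₀ hv₀) .nil)
  have hpath : hp.IsPath := by
    simp only [hp, SimpleGraph.Walk.cons_isPath_iff, SimpleGraph.Walk.isPath_iff_eq_nil,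
      SimpleGraph.Walk.support_cons, SimpleGraph.Walk.support_nil]
    refine ⟨⟨trivial, ?_⟩, ?_⟩
    · simp [Ne.symm hv₀]
    · simp [hu₀v₀, hu₀]
  have hlen : hp.length = G.dist u₀ v₀ := by
    rw [hdist2 u₀ v₀ hu₀ hv₀ hu₀v₀ hf₀]; simp [hp]
  have := hT (hmemT u₀) (hmemT v₀) (hmemT c) hu₀v₀ hu₀ hv₀ hp hpath hlen
  apply this
  simp [hp]

lemma cb_adj_none {k : ℕ} {n : Fin k → ℕ} (y : Option (Σ i : Fin k, Fin (n i - 1)))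
    (hy : y ≠ none) : (cliqueBouquet k n).Adj none y :=
  (SimpleGraph.fromRel_adj _ _ _).mpr ⟨Ne.symm hy, Or.inl (Or.inl rfl)⟩

lemma cb_adj_some {k : ℕ} {n : Fin k → ℕ} (i j : Fin k) (s : Fin (n i - 1))
    (t : Fin (n j - 1))
    (hne : (some ⟨i, s⟩ : Option (Σ i : Fin k, Fin (n i - 1))) ≠ some ⟨j, t⟩) :
    (cliqueBouquet k n).Adj (some ⟨i, s⟩) (some ⟨j, t⟩) ↔ i = j := by
  rw [cliqueBouquet, SimpleGraph.fromRel_adj]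
  constructor
  · rintro ⟨-, (h | ⟨i', s', t', h1, h2⟩) | (h | ⟨i', s', t', h1, h2⟩)⟩
    · exact absurd h (by simp)
    · have e1 := congrArg (Option.map Sigma.fst) h1
      have e2 := congrArg (Option.map Sigma.fst) h2
      simp only [Option.map_some] at e1 e2
      exact (Option.some.inj e1).trans (Option.some.inj e2).symm
    · exact absurd h (by simp)
    · have e1 := congrArg (Option.map Sigma.fst) h1
      have e2 := congrArg (Option.map Sigma.fst) h2
      simp only [Option.map_some] at e1 e2
      exact (Option.some.inj e2).trans (Option.some.inj e1).symm
  · rintro rfl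
    exact ⟨hne, Or.inl (Or.inr ⟨i, s, t, rfl, rfl⟩)⟩

lemma cb_adj_iff {k : ℕ} {n : Fin k → ℕ} (u v : Option (Σ i : Fin k, Fin (n i - 1)))
    (hu : u ≠ none) (hv : v ≠ none) (huv : u ≠ v) :
    (cliqueBouquet k n).Adj u v ↔ Option.map Sigma.fst u = Option.map Sigma.fst v := by
  match u, v with
  | none, _ => exact absurd rfl hu
  | some _, none => exact absurd rfl hv
  | some ⟨i, s⟩, some ⟨j, t⟩ =>
    rw [cb_adj_some i j s t huv]
    simp

/-- For `k ≥ 3` and `n_1 ≥ … ≥ n_k ≥ 2`, the graph obtained by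
identifying one vertex of each of `K_{n_1}, …, K_{n_k}` into a single vertex
`c` satisfies `gp(G) = n_1 + ⋯ + n_k - k`, and for every vertex `x ≠ c`,
`gp(G - x) = gp(G) - 1`. -/
theorem stmt_9 (k : ℕ) (hk : 3 ≤ k) (n : Fin k → ℕ)
    (hn2 : ∀ i, 2 ≤ n i) (hmono : ∀ i j : Fin k, i ≤ j → n j ≤ n i) :
    gpNum (cliqueBouquet k n) = (∑ i, n i) - k ∧
    ∀ x : Option (Σ i : Fin k, Fin (n i - 1)), x ≠ none →
      gpNum (delVert (cliqueBouquet k n) x) = gpNum (cliqueBouquet k n) - 1 := by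
  classical
  have hsum : ∑ i, (n i - 1) = (∑ i, n i) - k := by
    have h1 : ∑ i, ((n i - 1) + 1) = ∑ i, n i :=
      Finset.sum_congr rfl (fun i _ => Nat.sub_add_cancel (by have := hn2 i; omega))
    have h2 : ∑ i : Fin k, ((n i - 1) + 1) = (∑ i, (n i - 1)) + k := by
      rw [Finset.sum_add_distrib, Finset.sum_const, Finset.card_univ, Fintype.card_fin,
        smul_eq_mul, mul_one]
    omega
  have hcardV : Fintype.card (Option (Σ i : Fin k, Fin (n i - 1)))
      = (∑ i, (n i - 1)) + 1 := by
    simp [Fintype.card_option, Fintype.card_sigma]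
  have hgp : gpNum (cliqueBouquet k n) = (∑ i, n i) - k := by
    have hkey := key_lemma (cliqueBouquet k n) none (Option.map Sigma.fst)
      (fun y hy => cb_adj_none y hy) (fun u v hu hv huv => cb_adj_iff u v hu hv huv)
      (some ⟨⟨0, by omega⟩, ⟨0, by have := hn2 ⟨0, by omega⟩; omega⟩⟩)
      (some ⟨⟨1, by omega⟩, ⟨0, by have := hn2 ⟨1, by omega⟩; omega⟩⟩)
      (by simp) (by simp) (by simp [Fin.ext_iff])
    rw [hkey, hcardV, Nat.add_sub_cancel, hsum]
  refine ⟨hgp, ?_⟩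
  intro x hx
  obtain ⟨y, rfl⟩ := Option.ne_none_iff_exists'.mp hx
  obtain ⟨i₀, a₀⟩ := y
  obtain ⟨i, j, hij, hi0, hj0⟩ : ∃ i j : Fin k, i ≠ j ∧ i ≠ i₀ ∧ j ≠ i₀ := by
    by_cases h0 : (i₀ : ℕ) = 0
    · refine ⟨⟨1, by omega⟩, ⟨2, by omega⟩, ?_, ?_, ?_⟩ <;>
        · simp only [ne_eq, Fin.ext_iff]; omega
    · by_cases h1 : (i₀ : ℕ) = 1
      · refine ⟨⟨0, by omega⟩, ⟨2, by omega⟩, ?_, ?_, ?_⟩ <;>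
          · simp only [ne_eq, Fin.ext_iff]; omega
      · refine ⟨⟨0, by omega⟩, ⟨1, by omega⟩, ?_, ?_, ?_⟩ <;>
          · simp only [ne_eq, Fin.ext_iff]; omega
  have hxne : (none : Option (Σ i : Fin k, Fin (n i - 1))) ≠ some ⟨i₀, a₀⟩ := by simp
  have hc' : ∀ y : {y : Option (Σ i : Fin k, Fin (n i - 1)) // y ≠ some ⟨i₀, a₀⟩},
      y ≠ ⟨none, hxne⟩ →
      (delVert (cliqueBouquet k n) (some ⟨i₀, a₀⟩)).Adj ⟨none, hxne⟩ y := by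
    intro y hy
    exact cb_adj_none y.val (fun h => hy (Subtype.ext h))
  have hadj' : ∀ u v : {y : Option (Σ i : Fin k, Fin (n i - 1)) // y ≠ some ⟨i₀, a₀⟩},
      u ≠ ⟨none, hxne⟩ → v ≠ ⟨none, hxne⟩ → u ≠ v →
      ((delVert (cliqueBouquet k n) (some ⟨i₀, a₀⟩)).Adj u v ↔
        Option.map Sigma.fst u.val = Option.map Sigma.fst v.val) := by
    intro u v hu hv huv
    exact cb_adj_iff u.val v.val (fun h => hu (Subtype.ext h)) (fun h => hv (Subtype.ext h))
      (fun h => huv (Subtype.ext h))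
  have hkey2 := key_lemma (delVert (cliqueBouquet k n) (some ⟨i₀, a₀⟩)) ⟨none, hxne⟩
    (fun y => Option.map Sigma.fst y.val) hc' hadj'
    ⟨some ⟨i, ⟨0, by have := hn2 i; omega⟩⟩, by simp [hi0]⟩
    ⟨some ⟨j, ⟨0, by have := hn2 j; omega⟩⟩, by simp [hj0]⟩
    (by simp) (by simp) (by simp [hij])
  have hcardsub : Fintype.card {y : Option (Σ i : Fin k, Fin (n i - 1)) // y ≠ some ⟨i₀, a₀⟩}
      = Fintype.card (Option (Σ i : Fin k, Fin (n i - 1))) - 1 := by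
    have := Fintype.card_subtype_compl
      (fun y : Option (Σ i : Fin k, Fin (n i - 1)) => y = some ⟨i₀, a₀⟩)
    simpa [Fintype.card_subtype_eq] using this
  rw [hkey2, hcardsub, hcardV, Nat.add_sub_cancel, hgp, hsum]
end

section
/- Let G be a finite connected graph, e = uv an edge of G such that G − e is connected, and let x, y be vertices satisfying d_G(u,x) ≤ d_G(v,x) and d_G(u,y) ≤ d_G(v,y). Then a walk from x to y is a shortest x,y-path in G if and only if it is a shortest x,y-path in G − e; in particular d_G(x,y) = d_{G−e}(x,y). -/
open SimpleGraph

lemma aux_getElem {V : Type*} [DecidableEq V] {G : SimpleGraph V} {x y : V} (p : G.Walk x y)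
    (w : V) (hw : w ∈ p.support) :
    p.support[(p.takeUntil w hw).length]? = some w := by
  have hsup : p.support
      = (p.takeUntil w hw).support ++ (p.dropUntil w hw).support.tail := by
    conv_lhs => rw [← p.take_spec hw]
    exact Walk.support_append _ _
  rw [hsup, List.getElem?_append_left (by simp [Walk.length_support]),
    List.getElem?_eq_getElem (by simp [Walk.length_support])]
  congr 1
  have h2 := (p.takeUntil w hw).getLast_support
  rw [List.getLast_eq_getElem] at h2
  convert h2 using 2
  simp [Walk.length_support]

lemma aux_pos {V : Type*} [DecidableEq V] {G : SimpleGraph V} {x y u v : V} (p : G.Walk x y)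
    (hu : u ∈ p.support) (hv : v ∈ p.support)
    (h : (p.takeUntil u hu).length = (p.takeUntil v hv).length) : u = v := by
  have h1 := aux_getElem p u hu
  have h2 := aux_getElem p v hv
  rw [h] at h1
  rw [h1] at h2
  exact Option.some.inj h2


/-- Let `e = uv` be an edge of a finite connected graph `G` such
that `G - e` is connected, and let `x, y` be vertices with
`d_G(u,x) ≤ d_G(v,x)` and `d_G(u,y) ≤ d_G(v,y)`.  Then a walk from `x` to `y`
is a shortest `x,y`-path in `G` iff it is (i.e. comes from) a shortest
`x,y`-path in `G - e`; in particular `d_G(x,y) = d_{G-e}(x,y)`. -/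
theorem stmt_12 {V : Type*} [Fintype V] [DecidableEq V] (G : SimpleGraph V)
    (hG : G.Connected) (u v : V) (huv : G.Adj u v)
    (hconn : (G.deleteEdges {s(u, v)}).Connected)
    (x y : V) (hx : G.dist u x ≤ G.dist v x) (hy : G.dist u y ≤ G.dist v y) :
    (∀ p : G.Walk x y,
      (p.IsPath ∧ p.length = G.dist x y) ↔
      (∃ q : (G.deleteEdges {s(u, v)}).Walk x y,
        q.mapLe (SimpleGraph.deleteEdges_le {s(u, v)}) = p ∧
        q.IsPath ∧ q.length = (G.deleteEdges {s(u, v)}).dist x y)) ∧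
    G.dist x y = (G.deleteEdges {s(u, v)}).dist x y := by
  set G' := G.deleteEdges {s(u, v)} with hG'
  -- every shortest walk in G avoids the edge uv
  have key : ∀ p : G.Walk x y, p.length = G.dist x y → s(u, v) ∉ p.edges := by
    intro p hlen hmem
    have hu' : u ∈ p.support := Walk.fst_mem_support_of_mem_edges p hmem
    have hv' : v ∈ p.support := Walk.snd_mem_support_of_mem_edges p hmem
    have h1 : G.dist x u ≤ (p.takeUntil u hu').length := dist_le _
    have h2 : G.dist u y ≤ (p.dropUntil u hu').length := dist_le _
    have h3 : (p.takeUntil u hu').length + (p.dropUntil u hu').length = p.length := by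
      rw [← Walk.length_append, p.take_spec hu']
    have h4 : G.dist x v ≤ (p.takeUntil v hv').length := dist_le _
    have h5 : G.dist v y ≤ (p.dropUntil v hv').length := dist_le _
    have h6 : (p.takeUntil v hv').length + (p.dropUntil v hv').length = p.length := by
      rw [← Walk.length_append, p.take_spec hv']
    have h7 : G.dist x y ≤ G.dist x u + G.dist u y := hG.dist_triangle
    have h8 : G.dist x y ≤ G.dist x v + G.dist v y := hG.dist_triangle
    have hx' : G.dist x u ≤ G.dist x v := by rwa [SimpleGraph.dist_comm (u := x) (v := u), SimpleGraph.dist_comm (u := x) (v := v)]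
    have hab : (p.takeUntil u hu').length = (p.takeUntil v hv').length := by omega
    exact huv.ne (aux_pos p hu' hv' hab)
  have hdist : G.dist x y = G'.dist x y := by
    obtain ⟨q, hq⟩ := hconn.exists_walk_length_eq_dist x y
    obtain ⟨p, hp⟩ := hG.exists_walk_length_eq_dist x y
    have hle1 : G.dist x y ≤ G'.dist x y := by
      calc G.dist x y ≤ (q.mapLe (SimpleGraph.deleteEdges_le {s(u, v)})).length := dist_le _
        _ = q.length := Walk.length_map _ _
        _ = G'.dist x y := hq
    have hne : ∀ e ∈ p.edges, e ∉ ({s(u, v)} : Set (Sym2 V)) := by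
      intro e he hes
      exact key p hp (Set.mem_singleton_iff.mp hes ▸ he)
    have hle2 : G'.dist x y ≤ G.dist x y := by
      calc G'.dist x y ≤ (p.toDeleteEdges {s(u, v)} hne).length := dist_le _
        _ = p.length := Walk.length_transfer _ _
        _ = G.dist x y := hp
    omega
  refine ⟨fun p => ⟨fun ⟨hpath, hlen⟩ => ?_, fun ⟨q, hqp, hq1, hq2⟩ => ?_⟩, hdist⟩
  · have hne : ∀ e ∈ p.edges, e ∉ ({s(u, v)} : Set (Sym2 V)) := by
      intro e he hes
      exact key p hlen (Set.mem_singleton_iff.mp hes ▸ he)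
    refine ⟨p.toDeleteEdges {s(u, v)} hne, Walk.map_toDeleteEdges_eq _ hne, ?_, ?_⟩
    · exact Walk.IsPath.transfer _ hpath
    · rw [Walk.length_transfer, hlen, hdist]
  · constructor
    · rw [← hqp]; exact hq1.mapLe _
    · rw [← hqp, Walk.length_map, hq2, hdist]
end

section
/- Let G be a finite connected graph, e = uv an edge of G, and X a general position set of G. Then the set X_u = {w ∈ X : d_G(u,w) ≤ d_G(v,w)} is a general position set of G − e. -/
open SimpleGraph

lemma walk_length_ge_of_edge_mem {V : Type*} (G : SimpleGraph V) (hG : G.Connected) (u v : V) :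
    ∀ {x y : V} (Q : G.Walk x y), s(u, v) ∈ Q.edges →
      G.dist x u + 1 + G.dist v y ≤ Q.length ∨
      G.dist x v + 1 + G.dist u y ≤ Q.length := by
  intro x y Q
  induction Q with
  | nil => simp
  | @cons a b c hab Q ih =>
    intro he
    rw [SimpleGraph.Walk.edges_cons, List.mem_cons] at he
    rcases he with he | he
    · rw [Sym2.eq_iff] at he
      rcases he with ⟨rfl, rfl⟩ | ⟨rfl, rfl⟩
      · left
        have h2 : G.dist v c ≤ Q.length := SimpleGraph.dist_le Q
        simp only [SimpleGraph.Walk.length_cons, SimpleGraph.dist_self]; omega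
      · right
        have h2 : G.dist u c ≤ Q.length := SimpleGraph.dist_le Q
        simp only [SimpleGraph.Walk.length_cons, SimpleGraph.dist_self]; omega
    · have hd : ∀ w : V, G.dist a w ≤ G.dist b w + 1 := by
        intro w
        obtain ⟨p, hp⟩ := (hG b w).exists_walk_length_eq_dist
        calc G.dist a w ≤ (SimpleGraph.Walk.cons hab p).length := SimpleGraph.dist_le _
          _ = G.dist b w + 1 := by simp [hp]
      rcases ih he with h | h
      · left; have := hd u; simp only [SimpleGraph.Walk.length_cons]; omega
      · right; have := hd v; simp only [SimpleGraph.Walk.length_cons]; omega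

/-- If `e = uv` is an edge of a finite connected graph `G` and
`X` is a general position set of `G`, then
`X_u = {w ∈ X : d_G(u,w) ≤ d_G(v,w)}` is a general position set of `G - e`. -/
theorem stmt_13 {V : Type*} [Fintype V] [DecidableEq V] (G : SimpleGraph V)
    (hG : G.Connected) (u v : V) (huv : G.Adj u v)
    (X : Set V) (hX : IsGPSet G X) :
    IsGPSet (G.deleteEdges {s(u, v)}) {w ∈ X | G.dist u w ≤ G.dist v w} := by
  intro x y z hx hy hz hxy hxz hyz p hp hlen
  obtain ⟨hxX, hxd⟩ := hx
  obtain ⟨hyX, hyd⟩ := hy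
  obtain ⟨hzX, hzd⟩ := hz
  have hedges : ∀ e ∈ p.edges, e ∈ G.edgeSet := fun e he =>
    SimpleGraph.edgeSet_subset_edgeSet.mpr (SimpleGraph.deleteEdges_le _)
      (p.edges_subset_edgeSet he)
  have hqpath : (p.transfer G hedges).IsPath := hp.transfer hedges
  obtain ⟨Q, hQ⟩ := (hG x y).exists_walk_length_eq_dist
  have hQe : s(u, v) ∉ Q.edges := by
    intro hmem
    rcases walk_length_ge_of_edge_mem G hG u v Q hmem with h | h
    · have t : G.dist x y ≤ G.dist x u + G.dist u y := hG.dist_triangle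
      have huy : G.dist u y ≤ G.dist v y := hyd
      omega
    · have t : G.dist x y ≤ G.dist x u + G.dist u y := hG.dist_triangle
      have hvx : G.dist x v = G.dist v x := SimpleGraph.dist_comm ..
      have hux : G.dist u x = G.dist x u := SimpleGraph.dist_comm ..
      have huy : G.dist u x ≤ G.dist v x := hxd
      omega
  have hQH : (G.deleteEdges {s(u, v)}).dist x y ≤ G.dist x y := by
    have hQ' : ∀ e ∈ Q.edges, e ∉ ({s(u, v)} : Set (Sym2 V)) := by
      intro e he hes
      exact hQe (Set.mem_singleton_iff.mp hes ▸ he)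
    calc (G.deleteEdges {s(u, v)}).dist x y ≤ (Q.toDeleteEdges _ hQ').length :=
          SimpleGraph.dist_le _
      _ = Q.length := by
          simp [SimpleGraph.Walk.toDeleteEdges, SimpleGraph.Walk.length_transfer]
      _ = G.dist x y := hQ
  have hGle : G.dist x y ≤ (p.transfer G hedges).length := SimpleGraph.dist_le _
  have hqlen : (p.transfer G hedges).length = p.length :=
    SimpleGraph.Walk.length_transfer _ _
  have hqgeo : (p.transfer G hedges).length = G.dist x y := by omega
  have := hX hxX hyX hzX hxy hxz hyz (p.transfer G hedges) hqpath hqgeo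
  rwa [SimpleGraph.Walk.support_transfer] at this
end

section
/- Let G be a finite connected graph, e = uv an edge of G such that G − e is connected, and Y a general position set of G − e. Then the set Y_u = {w ∈ Y : d_{G−e}(u,w) ≤ d_{G−e}(v,w)} is a general position set of G. -/
open SimpleGraph

/-!
Write `H = G - uv`. A geodesic of `G` that avoids the edge `uv` is also a geodesic of `H`,
since deleting an edge can only increase distances, so it suffices to show that no geodesic
of `G` between `a, b ∈ Y_u` uses `uv`. If one did, traversing it as `a … u v … b` (up to
reversal), its two halves avoid `uv` and so
`d_H(a,b) ≤ d_H(a,u) + d_H(u,b) ≤ d_H(a,u) + d_H(v,b) ≤ d_G(a,u) + d_G(v,b) < d_G(a,b)`,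
contradicting `d_G ≤ d_H`.
-/

namespace SimpleGraph

variable {V : Type*} {G : SimpleGraph V}

theorem Walk.dist_add_dist_lt_length_of_mem_edges {a b x y : V} (p : G.Walk a b)
    (h : s(x, y) ∈ p.edges) :
    G.dist a x + G.dist y b < p.length ∨ G.dist a y + G.dist x b < p.length := by
  obtain ⟨i, hi, hxy⟩ := p.mk_mem_edges_iff_exists.mp h
  have hsplit : G.dist a (p.getVert i) + G.dist (p.getVert (i + 1)) b < p.length := by
    have htake := dist_le (p.take i)
    have hdrop := dist_le (p.drop (i + 1))
    rw [Walk.take_length] at htake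
    rw [Walk.drop_length] at hdrop
    omega
  obtain ⟨hx, hy⟩ | ⟨hy, hx⟩ := Sym2.eq_iff.mp hxy
  · exact .inl (hx ▸ hy ▸ hsplit)
  · exact .inr (hx ▸ hy ▸ hsplit)

/-- A shortest `a`–`u` walk cannot use `uv` when `v` is farther from `a` than `u`. -/
theorem dist_deleteEdges_le_of_dist_lt {a u v : V} (hau : G.Reachable a u)
    (h : G.dist a u < G.dist a v) :
    (G.deleteEdges {s(u, v)}).dist a u ≤ G.dist a u := by
  obtain ⟨q, hq⟩ := hau.exists_walk_length_eq_dist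
  have hne : s(u, v) ∉ q.edges := fun he => by
    have := q.dist_add_dist_lt_length_of_mem_edges he
    simp only [dist_self] at this
    omega
  calc (G.deleteEdges {s(u, v)}).dist a u ≤ (q.toDeleteEdge _ hne).length := dist_le _
    _ = G.dist a u := (Walk.length_transfer _ _).trans hq

theorem dist_le_dist_add_dist_of_dist_deleteEdges_le {u v b : V}
    (hconn : (G.deleteEdges {s(u, v)}).Connected)
    (hb : (G.deleteEdges {s(u, v)}).dist u b ≤ (G.deleteEdges {s(u, v)}).dist v b) (a : V) :
    G.dist a b ≤ G.dist a u + G.dist v b := by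
  set H := G.deleteEdges {s(u, v)}
  have hG : G.Connected := hconn.mono (G.deleteEdges_le _)
  by_contra! hlt
  have hav : G.dist a u < G.dist a v := by
    have := hG.dist_triangle (u := a) (v := v) (w := b)
    omega
  have hbu : G.dist b v < G.dist b u := by
    rw [dist_comm, G.dist_comm (u := b)]
    have := hG.dist_triangle (u := a) (v := u) (w := b)
    omega
  have hau_H : H.dist a u ≤ G.dist a u := dist_deleteEdges_le_of_dist_lt (hG a u) hav
  have hvb_H : H.dist v b ≤ G.dist v b := by
    rw [dist_comm, G.dist_comm, show H = G.deleteEdges {s(v, u)} by rw [Sym2.eq_swap]]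
    exact dist_deleteEdges_le_of_dist_lt (hG b v) hbu
  have hGH : G.dist a b ≤ H.dist a b := (hconn a b).dist_anti (G.deleteEdges_le _)
  have htri : H.dist a b ≤ H.dist a u + H.dist u b := hconn.dist_triangle
  omega

end SimpleGraph

theorem stmt_14_general {V : Type*} (G : SimpleGraph V)
    (u v : V)
    (hconn : (G.deleteEdges {s(u, v)}).Connected)
    (Y : Set V) (hY : IsGPSet (G.deleteEdges {s(u, v)}) Y) :
    IsGPSet G {w ∈ Y | (G.deleteEdges {s(u, v)}).dist u w ≤
      (G.deleteEdges {s(u, v)}).dist v w} := by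
  intro a b c ha hb hc hab hac hbc p hp hlen
  have hne : s(u, v) ∉ p.edges := fun he => by
    rcases p.dist_add_dist_lt_length_of_mem_edges he with h | h
    · have := dist_le_dist_add_dist_of_dist_deleteEdges_le hconn hb.2 a
      omega
    · have := dist_le_dist_add_dist_of_dist_deleteEdges_le hconn ha.2 b
      rw [G.dist_comm (u := b) (v := a), G.dist_comm (u := b) (v := u),
        G.dist_comm (u := v) (v := a)] at this
      omega
  have hgeod : (p.toDeleteEdge _ hne).length = (G.deleteEdges {s(u, v)}).dist a b :=
    le_antisymm
      ((Walk.length_transfer _ _).trans hlen ▸ (hconn a b).dist_anti (G.deleteEdges_le _))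
      (dist_le _)
  simpa [Walk.support_transfer] using hY ha.1 hb.1 hc.1 hab hac hbc _ (hp.toDeleteEdges _ _ _) hgeod

/-- If `e = uv` is an edge of a finite connected graph `G` such
that `G - e` is connected, and `Y` is a general position set of `G - e`, then
`Y_u = {w ∈ Y : d_{G-e}(u,w) ≤ d_{G-e}(v,w)}` is a general position set of `G`. -/
theorem stmt_14 {V : Type*} [Fintype V] [DecidableEq V] (G : SimpleGraph V)
    (hG : G.Connected) (u v : V) (huv : G.Adj u v)
    (hconn : (G.deleteEdges {s(u, v)}).Connected)
    (Y : Set V) (hY : IsGPSet (G.deleteEdges {s(u, v)}) Y) :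
    IsGPSet G {w ∈ Y | (G.deleteEdges {s(u, v)}).dist u w ≤
      (G.deleteEdges {s(u, v)}).dist v w} :=
  stmt_14_general G u v hconn Y hY
end
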